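/- arXiv:1510.06080 — 9 statements merged into one kernel-verified Lean document; each statement's English description precedes it below -/
import Mathlib

section
/- Let C₋ and C₊ be isotropic elasticity tensors on Sym₃ with Lamé parameters (λ₋, μ₋) and (λ₊, μ₊), each positive definite (μ∓ > 0 and 3λ∓ + 2μ∓ > 0), and let ν₋ = λ₋/(2(λ₋+μ₋)). Let ⟦C⟧ = C₊ − C₋, let n⁽¹⁾, …, n⁽ᵐ⁾ be unit vectors in ℝ³, let β⁽¹⁾, …, β⁽ᵐ⁾ ≥ 0 with Σᵢ β⁽ⁱ⁾ = 1, and let m₋ ∈ [0,1]. If ⟦C⟧ is sign-definite as a quadratic form on Sym₃ (positive definite or negative definite), then the operator ⟦C⟧⁻¹ + m₋ Σᵢ β⁽ⁱ⁾ K₋(n⁽ⁱ⁾) on Sym₃ is invertible, and its inverse M is sign-definite of the same sign as ⟦C⟧: positive definite if ⟦C⟧ is positive definite and negative definite if ⟦C⟧ is negative definite. -/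
open Matrix

noncomputable section

/-- 3×3 real matrices; symmetric ones model Sym₃. -/
abbrev Mat := Matrix (Fin 3) (Fin 3) ℝ

/-- Inner product on matrices: a:b = tr(ab). -/
def inn (a b : Mat) : ℝ := (a * b).trace

/-- Isotropic elasticity tensor with Lamé parameters l, m: ε ↦ l(tr ε)E + 2mε. -/
def isoC (l m : ℝ) (e : Mat) : Mat := (l * e.trace) • (1 : Mat) + (2*m) • e

/-- The interface operator K(n) for material parameters (μ, ν):
K(n):q = (1/(2μ))(qₙ⊗n + n⊗qₙ − (qₙₙ/(1−ν)) n⊗n). -/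
def Kop (μ ν : ℝ) (n : Fin 3 → ℝ) (q : Mat) : Mat :=
  (1/(2*μ)) • (vecMulVec (q.mulVec n) n + vecMulVec n (q.mulVec n)
    - ((n ⬝ᵥ q.mulVec n)/(1-ν)) • vecMulVec n n)

/-!
Both `⟦C⟧` and `D = ⟦C⟧⁻¹` are isotropic: they multiply the hydrostatic part `(tr q / 3) • 1`
and the deviatoric part of `q` by two scalars, so `⟦C⟧` is definite exactly when these two scalars
(`⟦3λ + 2μ⟧` and `⟦2μ⟧`) have a common sign. As quadratic forms `0 ≤ K₋(n) ≤ C₋⁻¹`: the lower bound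
is Cauchy–Schwarz, the upper one follows by splitting `q` along `n` and the plane `n⊥`. Hence the
convex combination `m₋ Σ βᵢ K₋(n⁽ⁱ⁾)` also lies between `0` and `C₋⁻¹`. If `⟦C⟧ > 0` then
`B = ⟦C⟧⁻¹ + m₋ Σ βᵢ K₋(n⁽ⁱ⁾) ≥ ⟦C⟧⁻¹ > 0`; if `⟦C⟧ < 0` then `B ≤ ⟦C⟧⁻¹ + C₋⁻¹`, whose two scalars
`⟦3λ + 2μ⟧⁻¹ + (3λ₋ + 2μ₋)⁻¹` and `⟦2μ⟧⁻¹ + (2μ₋)⁻¹` are negative because `C₊ = C₋ + ⟦C⟧ > 0`.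
A definite operator on `Sym₃` is invertible there, and `M = B⁻¹` satisfies `M q : q = B p : p`
with `p = M q`, so it has the same sign.
-/

section InnerProduct

lemma inn_comm (a b : Mat) : inn a b = inn b a := trace_mul_comm a b

@[simp] lemma inn_add_left (a b c : Mat) : inn (a + b) c = inn a c + inn b c := by
  simp [inn, add_mul]

@[simp] lemma inn_sub_left (a b c : Mat) : inn (a - b) c = inn a c - inn b c := by
  simp [inn, sub_mul]

@[simp] lemma inn_smul_left (r : ℝ) (a b : Mat) : inn (r • a) b = r * inn a b := by
  simp [inn]

@[simp] lemma inn_add_right (a b c : Mat) : inn a (b + c) = inn a b + inn a c := by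
  simp [inn, mul_add]

@[simp] lemma inn_sub_right (a b c : Mat) : inn a (b - c) = inn a b - inn a c := by
  simp [inn, mul_sub]

@[simp] lemma inn_smul_right (r : ℝ) (a b : Mat) : inn a (r • b) = r * inn a b := by
  simp [inn]

@[simp] lemma inn_zero_left (q : Mat) : inn 0 q = 0 := by simp [inn]

lemma inn_sum_left {ι : Type*} (s : Finset ι) (f : ι → Mat) (q : Mat) :
    inn (∑ i ∈ s, f i) q = ∑ i ∈ s, inn (f i) q := by
  simp [inn, Finset.sum_mul, trace_sum]

@[simp] lemma inn_one_left (q : Mat) : inn 1 q = q.trace := by simp [inn]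

@[simp] lemma inn_one_right (q : Mat) : inn q 1 = q.trace := by simp [inn]

@[simp] lemma inn_vecMulVec_left (u v : Fin 3 → ℝ) (q : Mat) :
    inn (vecMulVec u v) q = v ⬝ᵥ q *ᵥ u := by
  rw [inn, vecMulVec_mul, trace_vecMulVec, dotProduct_comm, ← dotProduct_mulVec]

@[simp] lemma inn_vecMulVec_right (q : Mat) (u v : Fin 3 → ℝ) :
    inn q (vecMulVec u v) = v ⬝ᵥ q *ᵥ u := by
  rw [inn_comm, inn_vecMulVec_left]

lemma vecMulVec_mulVec_eq_smul (u v w : Fin 3 → ℝ) : vecMulVec u v *ᵥ w = (v ⬝ᵥ w) • u := by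
  rw [vecMulVec_mulVec, op_smul_eq_smul]

lemma inn_self_eq_trace_conjTranspose_mul_self {q : Mat} (hq : q.IsSymm) :
    inn q q = (qᴴ * q).trace := by
  rw [conjTranspose_eq_transpose_of_trivial, hq.eq, inn]

lemma inn_self_nonneg {q : Mat} (hq : q.IsSymm) : 0 ≤ inn q q := by
  rw [inn_self_eq_trace_conjTranspose_mul_self hq]
  exact (posSemidef_conjTranspose_mul_self q).trace_nonneg

lemma inn_self_pos {q : Mat} (hq : q.IsSymm) (hne : q ≠ 0) : 0 < inn q q := by
  refine (inn_self_nonneg hq).lt_of_ne' ?_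
  rwa [inn_self_eq_trace_conjTranspose_mul_self hq, Ne, trace_conjTranspose_mul_self_eq_zero_iff]

lemma sq_trace_le_three_mul_inn_self {q : Mat} (hq : q.IsSymm) :
    q.trace ^ 2 ≤ 3 * inn q q := by
  have hdev := inn_self_nonneg (hq.sub (isSymm_one.smul (q.trace / 3)))
  simp only [inn_sub_left, inn_sub_right, inn_smul_left, inn_smul_right, inn_one_left,
    inn_one_right, trace_sub, trace_smul, trace_one, Fintype.card_fin, Nat.cast_ofNat,
    smul_eq_mul] at hdev
  nlinarith

lemma sq_trace_le_two_mul_inn_self {X : Mat} (hX : X.IsSymm) {n : Fin 3 → ℝ} (hn : n ⬝ᵥ n = 1)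
    (hXn : X *ᵥ n = 0) : X.trace ^ 2 ≤ 2 * inn X X := by
  have hN : (vecMulVec n n).IsSymm := transpose_vecMulVec n n
  -- `1 - n ⊗ n` is the identity of the plane `n⊥`, where `X` lives; it has trace 2
  have h := inn_self_nonneg (hX.sub ((isSymm_one.sub hN).smul (X.trace / 2)))
  simp only [inn_sub_left, inn_sub_right, inn_smul_left, inn_smul_right, inn_one_left,
    inn_one_right, inn_vecMulVec_left, inn_vecMulVec_right, trace_sub, trace_smul, trace_one,
    trace_vecMulVec, Fintype.card_fin, Nat.cast_ofNat, smul_eq_mul, sub_mulVec, smul_mulVec,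
    one_mulVec, vecMulVec_mulVec_eq_smul, hXn, hn, dotProduct_zero, one_smul, sub_self,
    smul_zero, sub_zero] at h
  nlinarith

lemma isSymm_sum {ι : Type*} {s : Finset ι} {f : ι → Mat} (hf : ∀ i, (f i).IsSymm) :
    (∑ i ∈ s, f i).IsSymm := by
  simp only [IsSymm, transpose_sum, (hf _).eq]

end InnerProduct

section Isotropic

/-- The quadratic form of the isotropic tensor acting as `k` on multiples of `1` and as `g` on
trace-free matrices. -/
def isoQuadForm (k g : ℝ) (q : Mat) : ℝ := k * (q.trace ^ 2 / 3) + g * (inn q q - q.trace ^ 2 / 3)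

lemma isoQuadForm_add (k g k' g' : ℝ) (q : Mat) :
    isoQuadForm k g q + isoQuadForm k' g' q = isoQuadForm (k + k') (g + g') q := by
  simp only [isoQuadForm]; ring

lemma isoQuadForm_neg (k g : ℝ) (q : Mat) : isoQuadForm (-k) (-g) q = -isoQuadForm k g q := by
  simp only [isoQuadForm]; ring

lemma isoQuadForm_pos {k g : ℝ} (hk : 0 < k) (hg : 0 < g) {q : Mat} (hq : q.IsSymm)
    (hne : q ≠ 0) : 0 < isoQuadForm k g q := by
  have hQ := inn_self_pos hq hne
  have hdev : 0 ≤ inn q q - q.trace ^ 2 / 3 := by linarith [sq_trace_le_three_mul_inn_self hq]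
  unfold isoQuadForm
  rcases eq_or_ne q.trace 0 with ht | ht
  · simpa [ht] using mul_pos hg hQ
  · exact add_pos_of_pos_of_nonneg (mul_pos hk (by positivity)) (mul_nonneg hg.le hdev)

lemma isoQuadForm_one (k g : ℝ) : isoQuadForm k g 1 = 3 * k := by
  simp only [isoQuadForm, inn_one_right, trace_one, Fintype.card_fin, Nat.cast_ofNat]; ring

lemma isoQuadForm_shear (k g : ℝ) : isoQuadForm k g (diagonal ![1, -1, 0]) = 2 * g := by
  simp [isoQuadForm, inn, trace_diagonal, Fin.sum_univ_three]
  ring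

lemma isoQuadForm_pos_iff (k g : ℝ) :
    (∀ q : Mat, q.IsSymm → q ≠ 0 → 0 < isoQuadForm k g q) ↔ 0 < k ∧ 0 < g := by
  refine ⟨fun h => ⟨?_, ?_⟩, fun ⟨hk, hg⟩ _ => isoQuadForm_pos hk hg⟩
  · have := h 1 isSymm_one one_ne_zero
    rw [isoQuadForm_one] at this; linarith
  · have := h (diagonal ![1, -1, 0]) (isSymm_diagonal _) fun h => by simpa using congr_fun₂ h 0 0
    rw [isoQuadForm_shear] at this; linarith

lemma isoQuadForm_neg_iff (k g : ℝ) :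
    (∀ q : Mat, q.IsSymm → q ≠ 0 → isoQuadForm k g q < 0) ↔ k < 0 ∧ g < 0 := by
  simpa [isoQuadForm_neg] using isoQuadForm_pos_iff (-k) (-g)

lemma isoC_isSymm (l m : ℝ) {q : Mat} (hq : q.IsSymm) : (isoC l m q).IsSymm :=
  (isSymm_one.smul _).add (hq.smul _)

lemma isoC_sub (l m l' m' : ℝ) (q : Mat) :
    isoC l m q - isoC l' m' q = isoC (l - l') (m - m') q := by
  simp only [isoC]; module

lemma isoC_isoC (l m l' m' : ℝ) (q : Mat) :
    isoC l m (isoC l' m' q) = isoC (l * (3 * l' + 2 * m') + 2 * m * l') (2 * m * m') q := by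
  simp only [isoC, trace_add, trace_smul, trace_one, Fintype.card_fin, Nat.cast_ofNat, smul_eq_mul]
  module

lemma inn_isoC_self (l m : ℝ) (q : Mat) :
    inn (isoC l m q) q = isoQuadForm (3 * l + 2 * m) (2 * m) q := by
  simp only [isoC, isoQuadForm, inn_add_left, inn_smul_left, inn_one_left]
  ring

def isoCompliance (l m : ℝ) : Mat → Mat := isoC (-l / (2 * m * (3 * l + 2 * m))) (1 / (4 * m))

lemma isoC_isoCompliance {l m : ℝ} (hm : m ≠ 0) (hk : 3 * l + 2 * m ≠ 0) (q : Mat) :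
    isoC l m (isoCompliance l m q) = q := by
  have h0 : l * (3 * (-l / (2 * m * (3 * l + 2 * m))) + 2 * (1 / (4 * m)))
      + 2 * m * (-l / (2 * m * (3 * l + 2 * m))) = 0 := by
    grind
  have h1 : 2 * m * (1 / (4 * m)) = 1 / 2 := by field_simp; ring
  rw [isoCompliance, isoC_isoC, h0, h1]
  simp [isoC]

lemma inn_isoCompliance_self {l m : ℝ} (hm : m ≠ 0) (hk : 3 * l + 2 * m ≠ 0) (q : Mat) :
    inn (isoCompliance l m q) q = isoQuadForm (3 * l + 2 * m)⁻¹ (2 * m)⁻¹ q := by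
  rw [isoCompliance, inn_isoC_self]
  congr 1 <;> field_simp <;> ring

end Isotropic

section InterfaceOperator

lemma sq_dotProduct_le {ι : Type*} [Fintype ι] {n : ι → ℝ} (hn : n ⬝ᵥ n = 1) (a : ι → ℝ) :
    (n ⬝ᵥ a) ^ 2 ≤ a ⬝ᵥ a := by
  have h := dotProduct_star_self_nonneg (a - (n ⬝ᵥ a) • n)
  simp only [star_trivial, sub_dotProduct, dotProduct_sub, smul_dotProduct, dotProduct_smul,
    smul_eq_mul, hn, dotProduct_comm a n] at h
  nlinarith

lemma dotProduct_mulVec_of_isSymm {q : Mat} (hq : q.IsSymm) (u v : Fin 3 → ℝ) :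
    u ⬝ᵥ q *ᵥ v = q *ᵥ u ⬝ᵥ v := by
  rw [dotProduct_mulVec, ← hq.eq, vecMul_transpose, hq.eq]

lemma Kop_isSymm (μ ν : ℝ) (n : Fin 3 → ℝ) (q : Mat) : (Kop μ ν n q).IsSymm := by
  simp only [IsSymm, Kop, transpose_smul, transpose_sub, transpose_add, transpose_vecMulVec,
    add_comm (vecMulVec n (q *ᵥ n))]

def kopLinearMap (μ ν : ℝ) (n : Fin 3 → ℝ) : Mat →ₗ[ℝ] Mat where
  toFun := Kop μ ν n
  map_add' p q := by
    simp only [Kop, add_mulVec, dotProduct_add, add_vecMulVec, vecMulVec_add, add_div, add_smul]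
    module
  map_smul' r q := by
    simp only [Kop, smul_mulVec, dotProduct_smul, smul_vecMulVec, vecMulVec_smul, smul_eq_mul,
      mul_div_assoc, RingHom.id_apply]
    module

lemma inn_Kop_self (μ ν : ℝ) (n : Fin 3 → ℝ) {q : Mat} (hq : q.IsSymm) :
    inn (Kop μ ν n q) q
      = (2 * (q *ᵥ n ⬝ᵥ q *ᵥ n) - (n ⬝ᵥ q *ᵥ n) ^ 2 / (1 - ν)) / (2 * μ) := by
  simp only [Kop, inn_smul_left, inn_sub_left, inn_add_left, inn_vecMulVec_left,
    dotProduct_mulVec_of_isSymm hq n (q *ᵥ n)]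
  ring

lemma inn_Kop_self_nonneg {μ ν : ℝ} (hμ : 0 < μ) (hν : ν ≤ 1 / 2) {n : Fin 3 → ℝ}
    (hn : n ⬝ᵥ n = 1) {q : Mat} (hq : q.IsSymm) : 0 ≤ inn (Kop μ ν n q) q := by
  rw [inn_Kop_self μ ν n hq]
  have hcs := sq_dotProduct_le hn (q *ᵥ n)
  have h : (n ⬝ᵥ q *ᵥ n) ^ 2 / (1 - ν) ≤ 2 * (n ⬝ᵥ q *ᵥ n) ^ 2 := by
    rw [div_le_iff₀ (by linarith)]
    nlinarith [sq_nonneg (n ⬝ᵥ q *ᵥ n)]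
  exact div_nonneg (by linarith) (by positivity)

/-- For symmetric `q` and unit `n` this is `(1 - n ⊗ n) q (1 - n ⊗ n)`, the part of `q` acting
in the plane orthogonal to `n`. -/
def planePart (n : Fin 3 → ℝ) (q : Mat) : Mat :=
  q - vecMulVec (q *ᵥ n) n - vecMulVec n (q *ᵥ n) + (n ⬝ᵥ q *ᵥ n) • vecMulVec n n

lemma planePart_isSymm (n : Fin 3 → ℝ) {q : Mat} (hq : q.IsSymm) : (planePart n q).IsSymm := by
  simp only [IsSymm, planePart, transpose_add, transpose_sub, transpose_smul,
    transpose_vecMulVec, hq.eq]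
  abel

lemma planePart_mulVec {n : Fin 3 → ℝ} (hn : n ⬝ᵥ n = 1) (q : Mat) :
    planePart n q *ᵥ n = 0 := by
  simp only [planePart, add_mulVec, sub_mulVec, smul_mulVec, vecMulVec_mulVec_eq_smul, hn,
    one_smul, dotProduct_comm (q *ᵥ n) n]
  abel

lemma trace_planePart {n : Fin 3 → ℝ} (hn : n ⬝ᵥ n = 1) (q : Mat) :
    (planePart n q).trace = q.trace - n ⬝ᵥ q *ᵥ n := by
  simp [planePart, hn, dotProduct_comm (q *ᵥ n) n]

lemma inn_planePart_self {n : Fin 3 → ℝ} (hn : n ⬝ᵥ n = 1) {q : Mat} (hq : q.IsSymm) :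
    inn (planePart n q) (planePart n q)
      = inn q q - 2 * (q *ᵥ n ⬝ᵥ q *ᵥ n) + (n ⬝ᵥ q *ᵥ n) ^ 2 := by
  simp only [planePart, inn_add_left, inn_sub_left, inn_smul_left, inn_add_right, inn_sub_right,
    inn_smul_right, inn_vecMulVec_left, inn_vecMulVec_right, sub_mulVec, add_mulVec, smul_mulVec,
    vecMulVec_mulVec_eq_smul, dotProduct_add, dotProduct_sub, dotProduct_smul, smul_eq_mul, hn,
    dotProduct_mulVec_of_isSymm hq n (q *ᵥ n), dotProduct_comm (q *ᵥ n) n]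
  ring

lemma inn_Kop_self_le {μ ν : ℝ} (hμ : 0 < μ) (hν : -1 < ν) (hν' : ν < 1) {n : Fin 3 → ℝ}
    (hn : n ⬝ᵥ n = 1) {q : Mat} (hq : q.IsSymm) :
    inn (Kop μ ν n q) q ≤ (inn q q - ν / (1 + ν) * q.trace ^ 2) / (2 * μ) := by
  rw [inn_Kop_self μ ν n hq]
  refine div_le_div_of_nonneg_right ?_ (by positivity)
  have hX := sq_trace_le_two_mul_inn_self (planePart_isSymm n hq) hn (planePart_mulVec hn q)
  rw [trace_planePart hn, inn_planePart_self hn hq] at hX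
  set s := n ⬝ᵥ q *ᵥ n
  set u := q.trace - s
  have h₁ : 0 < 1 - ν := by linarith
  have h₂ : 0 < 1 + ν := by linarith
  -- the defect is `|X|² - (tr X)² / 2 ≥ 0` for `X = planePart n q`, plus a perfect square
  have hsq : 0 ≤ ((1 - ν) * u - 2 * ν * s) ^ 2 / (2 * (1 - ν) * (1 + ν)) := by positivity
  have key : (inn q q - ν / (1 + ν) * q.trace ^ 2) - (2 * (q *ᵥ n ⬝ᵥ q *ᵥ n) - s ^ 2 / (1 - ν))
      = (inn q q - 2 * (q *ᵥ n ⬝ᵥ q *ᵥ n) + s ^ 2 - u ^ 2 / 2)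
        + ((1 - ν) * u - 2 * ν * s) ^ 2 / (2 * (1 - ν) * (1 + ν)) := by
    have : q.trace = u + s := by ring
    rw [this]
    field_simp [h₁.ne', h₂.ne']
    ring
  linarith

lemma inn_Kop_self_mem_Icc {l μ : ℝ} (hμ : 0 < μ) (hk : 0 < 3 * l + 2 * μ) {n : Fin 3 → ℝ}
    (hn : n ⬝ᵥ n = 1) {q : Mat} (hq : q.IsSymm) :
    inn (Kop μ (l / (2 * (l + μ))) n q) q ∈ Set.Icc 0 (inn (isoCompliance l μ q) q) := by
  have hlμ : 0 < 2 * (l + μ) := by linarith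
  have hν : -1 < l / (2 * (l + μ)) := by rw [lt_div_iff₀ hlμ]; linarith
  have hν' : l / (2 * (l + μ)) ≤ 1 / 2 := by rw [div_le_iff₀ hlμ]; linarith
  refine ⟨inn_Kop_self_nonneg hμ hν' hn hq,
    (inn_Kop_self_le hμ hν (by linarith) hn hq).trans_eq ?_⟩
  rw [inn_isoCompliance_self hμ.ne' hk.ne', isoQuadForm]
  grind

lemma inn_smul_sum_Kop_self_mem_Icc {ι : Type*} [Fintype ι] {l μ c : ℝ} (hμ : 0 < μ)
    (hk : 0 < 3 * l + 2 * μ) (hc : c ∈ Set.Icc (0 : ℝ) 1) {n : ι → Fin 3 → ℝ}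
    (hn : ∀ i, n i ⬝ᵥ n i = 1) {β : ι → ℝ} (hβ : ∀ i, 0 ≤ β i) (hβsum : ∑ i, β i = 1)
    {q : Mat} (hq : q.IsSymm) :
    inn (c • ∑ i, β i • Kop μ (l / (2 * (l + μ))) (n i) q) q
      ∈ Set.Icc 0 (inn (isoCompliance l μ q) q) := by
  have hmem := (convex_Icc _ _).sum_mem (fun i _ => hβ i) hβsum
    (fun i _ => inn_Kop_self_mem_Icc hμ hk (hn i) hq)
  rw [inn_smul_left, inn_sum_left]
  simp only [inn_smul_left, ← smul_eq_mul (β _)]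
  exact (convex_Icc _ _).smul_mem_of_zero_mem ⟨le_rfl, hmem.1.trans hmem.2⟩ hmem hc

end InterfaceOperator

section Inverse

lemma Submodule.exists_inverse_of_mapsTo {K V : Type*} [Field K] [AddCommGroup V] [Module K V]
    (S : Submodule K V) [FiniteDimensional K S] (B : V →ₗ[K] V) (hBS : ∀ x ∈ S, B x ∈ S)
    (hker : ∀ x ∈ S, B x = 0 → x = 0) :
    ∃ M : V → V, ∀ x ∈ S, M x ∈ S ∧ B (M x) = x ∧ M (B x) = x := by
  classical
  have hinj : Function.Injective (B.restrict hBS) := by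
    rw [← LinearMap.ker_eq_bot, LinearMap.ker_eq_bot']
    exact fun x hx => Subtype.ext (hker x x.2 (congrArg Subtype.val hx))
  let e := LinearEquiv.ofInjectiveEndo _ hinj
  refine ⟨fun x => if hx : x ∈ S then (e.symm ⟨x, hx⟩ : V) else 0, fun x hx => ?_⟩
  refine ⟨by simp [hx], ?_, ?_⟩
  · simp only [hx, dite_true]
    exact congrArg Subtype.val (e.apply_symm_apply ⟨x, hx⟩)
  · simp only [hBS x hx, dite_true]
    exact congrArg Subtype.val (e.symm_apply_apply ⟨x, hx⟩)

lemma isSymm_iff_mem_selfAdjoint_submodule {q : Mat} :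
    q.IsSymm ↔ q ∈ selfAdjoint.submodule ℝ Mat := by
  rw [← isHermitian_iff_isSymm]
  exact Iff.rfl

lemma exists_isSymm_inverse (B : Mat →ₗ[ℝ] Mat) (hBS : ∀ q, q.IsSymm → (B q).IsSymm)
    (hdef : ∀ q, q.IsSymm → q ≠ 0 → inn (B q) q ≠ 0) :
    ∃ M : Mat → Mat, ∀ q, q.IsSymm → (M q).IsSymm ∧ B (M q) = q ∧ M (B q) = q := by
  simpa only [← isSymm_iff_mem_selfAdjoint_submodule] using
    (selfAdjoint.submodule ℝ Mat).exists_inverse_of_mapsTo B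
      (by simpa only [← isSymm_iff_mem_selfAdjoint_submodule] using hBS)
      (by
        simp only [← isSymm_iff_mem_selfAdjoint_submodule]
        exact fun q hq hBq => by_contra fun hne => hdef q hq hne (by simp [hBq]))

lemma inn_self_mem_of_rightInverse {s : Set ℝ} (B : Mat →ₗ[ℝ] Mat) {M : Mat → Mat}
    (hM : ∀ q, q.IsSymm → (M q).IsSymm ∧ B (M q) = q)
    (hB : ∀ p, p.IsSymm → p ≠ 0 → inn (B p) p ∈ s) {q : Mat} (hq : q.IsSymm) (hne : q ≠ 0) :
    inn (M q) q ∈ s := by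
  obtain ⟨hMq, hBMq⟩ := hM q hq
  have hMq0 : M q ≠ 0 := fun h => hne (by rw [← hBMq, h, map_zero])
  nth_rw 2 [← hBMq]
  exact inn_comm (M q) _ ▸ hB (M q) hMq hMq0

end Inverse

lemma inv_add_inv_neg {a b : ℝ} (ha : a < 0) (hb : 0 < b) (hab : 0 < a + b) : a⁻¹ + b⁻¹ < 0 := by
  rw [inv_add_inv ha.ne hb.ne']
  exact div_neg_of_pos_of_neg hab (mul_neg_of_neg_of_pos ha hb)

theorem transmitting_tensor_sign_definite_general
    (lm μm lp μp : ℝ)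
    (hμm : 0 < μm) (hkm : 0 < 3*lm + 2*μm) (hμp : 0 < μp) (hkp : 0 < 3*lp + 2*μp)
    (νm : ℝ) (hνm : νm = lm / (2*(lm + μm)))
    (jump : Mat → Mat) (hjump : ∀ q : Mat, jump q = isoC lp μp q - isoC lm μm q)
    (m : ℕ) (nv : Fin m → Fin 3 → ℝ) (hnv : ∀ i, nv i ⬝ᵥ nv i = 1)
    (β : Fin m → ℝ) (hβ : ∀ i, 0 ≤ β i) (hβsum : ∑ i, β i = 1)
    (mminus : ℝ) (hm : mminus ∈ Set.Icc (0:ℝ) 1)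
    (D : Mat →ₗ[ℝ] Mat)
    (hDsymm : ∀ q : Mat, q.IsSymm → (D q).IsSymm)
    (hD₁ : ∀ q : Mat, q.IsSymm → D (jump q) = q)
    (hsign : (∀ q : Mat, q.IsSymm → q ≠ 0 → 0 < inn (jump q) q) ∨
             (∀ q : Mat, q.IsSymm → q ≠ 0 → inn (jump q) q < 0)) :
    ∃ M : Mat → Mat,
      (∀ q : Mat, q.IsSymm → (M q).IsSymm
        ∧ D (M q) + mminus • ∑ i, β i • Kop μm νm (nv i) (M q) = q
        ∧ M (D q + mminus • ∑ i, β i • Kop μm νm (nv i) q) = q)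
      ∧ ((∀ q : Mat, q.IsSymm → q ≠ 0 → 0 < inn (jump q) q) →
            ∀ q : Mat, q.IsSymm → q ≠ 0 → 0 < inn (M q) q)
      ∧ ((∀ q : Mat, q.IsSymm → q ≠ 0 → inn (jump q) q < 0) →
            ∀ q : Mat, q.IsSymm → q ≠ 0 → inn (M q) q < 0) := by
  subst hνm
  set k := 3 * (lp - lm) + 2 * (μp - μm)
  set g := 2 * (μp - μm)
  have hjump' : ∀ q, jump q = isoC (lp - lm) (μp - μm) q := fun q => by rw [hjump, isoC_sub]
  simp only [hjump', inn_isoC_self, isoQuadForm_pos_iff, isoQuadForm_neg_iff] at hsign ⊢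
  obtain ⟨hk, hg⟩ : k ≠ 0 ∧ μp - μm ≠ 0 := by
    rcases hsign with h | h
    exacts [⟨h.1.ne', by linarith [h.2]⟩, ⟨h.1.ne, by linarith [h.2]⟩]
  have hD : ∀ q, q.IsSymm → D q = isoCompliance (lp - lm) (μp - μm) q := fun q hq => by
    conv_lhs => rw [← isoC_isoCompliance hg hk q, ← hjump']
    exact hD₁ _ (isoC_isSymm _ _ hq)
  set B := D + mminus • ∑ i, β i • kopLinearMap μm (lm / (2 * (lm + μm))) (nv i)
  have hB : ∀ q, B q = D q + mminus • ∑ i, β i • Kop μm (lm / (2 * (lm + μm))) (nv i) q :=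
    fun q => by simp [B, kopLinearMap]
  -- as quadratic forms, `⟦C⟧⁻¹ ≤ B ≤ ⟦C⟧⁻¹ + C₋⁻¹`
  have hB_form : ∀ q, q.IsSymm → inn (B q) q - isoQuadForm k⁻¹ g⁻¹ q
      ∈ Set.Icc 0 (isoQuadForm (3 * lm + 2 * μm)⁻¹ (2 * μm)⁻¹ q) := fun q hq => by
    rw [hB, inn_add_left, hD q hq, inn_isoCompliance_self hg hk, add_sub_cancel_left,
      ← inn_isoCompliance_self hμm.ne' hkm.ne']
    exact inn_smul_sum_Kop_self_mem_Icc hμm hkm hm hnv hβ hβsum hq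
  have hB_pos : 0 < k ∧ 0 < g → ∀ q, q.IsSymm → q ≠ 0 → 0 < inn (B q) q :=
    fun ⟨hk, hg⟩ q hq hne => by
      linarith [(hB_form q hq).1, isoQuadForm_pos (inv_pos.2 hk) (inv_pos.2 hg) hq hne]
  have hB_neg : k < 0 ∧ g < 0 → ∀ q, q.IsSymm → q ≠ 0 → inn (B q) q < 0 :=
    fun ⟨hk, hg⟩ q hq hne => by
      have hk' : k⁻¹ + (3 * lm + 2 * μm)⁻¹ < 0 := inv_add_inv_neg hk hkm (by linarith)
      have hg' : g⁻¹ + (2 * μm)⁻¹ < 0 := inv_add_inv_neg hg (by linarith) (by linarith)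
      linarith [(hB_form q hq).2, isoQuadForm_add k⁻¹ g⁻¹ (3 * lm + 2 * μm)⁻¹ (2 * μm)⁻¹ q,
        (isoQuadForm_neg_iff _ _).2 ⟨hk', hg'⟩ q hq hne]
  obtain ⟨M, hM⟩ := exists_isSymm_inverse B
    (fun q hq => by
      rw [hB]
      exact (hDsymm q hq).add (.smul (isSymm_sum fun i => .smul (Kop_isSymm ..) _) _))
    (fun q hq hne => by
      rcases hsign with h | h
      exacts [(hB_pos h q hq hne).ne', (hB_neg h q hq hne).ne])
  have hM' q hq : (M q).IsSymm ∧ B (M q) = q := ⟨(hM q hq).1, (hM q hq).2.1⟩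
  exact ⟨M, fun q hq => by simpa only [hB] using hM q hq,
    fun h _ => inn_self_mem_of_rightInverse (s := Set.Ioi 0) B hM' (hB_pos h),
    fun h _ => inn_self_mem_of_rightInverse (s := Set.Iio 0) B hM' (hB_neg h)⟩

/-- if the jump ⟦C⟧ of isotropic elasticity tensors is sign-definite on Sym₃,
then the operator ⟦C⟧⁻¹ + m₋ Σᵢ β⁽ⁱ⁾ K₋(n⁽ⁱ⁾) is invertible on Sym₃ and its inverse M is
sign-definite of the same sign as ⟦C⟧. -/
theorem transmitting_tensor_sign_definite
    (lm μm lp μp : ℝ)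
    (hμm : 0 < μm) (hkm : 0 < 3*lm + 2*μm) (hμp : 0 < μp) (hkp : 0 < 3*lp + 2*μp)
    (νm : ℝ) (hνm : νm = lm / (2*(lm + μm)))
    (jump : Mat → Mat) (hjump : ∀ q : Mat, jump q = isoC lp μp q - isoC lm μm q)
    (m : ℕ) (nv : Fin m → Fin 3 → ℝ) (hnv : ∀ i, nv i ⬝ᵥ nv i = 1)
    (β : Fin m → ℝ) (hβ : ∀ i, 0 ≤ β i) (hβsum : ∑ i, β i = 1)
    (mminus : ℝ) (hm : mminus ∈ Set.Icc (0:ℝ) 1)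
    (D : Mat →ₗ[ℝ] Mat)
    (hDsymm : ∀ q : Mat, q.IsSymm → (D q).IsSymm)
    (hD₁ : ∀ q : Mat, q.IsSymm → D (jump q) = q)
    (hD₂ : ∀ q : Mat, q.IsSymm → jump (D q) = q)
    (hsign : (∀ q : Mat, q.IsSymm → q ≠ 0 → 0 < inn (jump q) q) ∨
             (∀ q : Mat, q.IsSymm → q ≠ 0 → inn (jump q) q < 0)) :
    ∃ M : Mat → Mat,
      (∀ q : Mat, q.IsSymm → (M q).IsSymm
        ∧ D (M q) + mminus • ∑ i, β i • Kop μm νm (nv i) (M q) = q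
        ∧ M (D q + mminus • ∑ i, β i • Kop μm νm (nv i) q) = q)
      ∧ ((∀ q : Mat, q.IsSymm → q ≠ 0 → 0 < inn (jump q) q) →
            ∀ q : Mat, q.IsSymm → q ≠ 0 → 0 < inn (M q) q)
      ∧ ((∀ q : Mat, q.IsSymm → q ≠ 0 → inn (jump q) q < 0) →
            ∀ q : Mat, q.IsSymm → q ≠ 0 → inn (M q) q < 0) :=
  transmitting_tensor_sign_definite_general lm μm lp μp hμm hkm hμp hkp νm hνm jump hjump m nv hnv β
    hβ hβsum mminus hm D hDsymm hD₁ hsign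
end
end

section
/- Fix n ≥ 2 and k ∈ {1, …, n−1}. Let (m₁A⁽ⁱ⁾)ᵢ₌₁ⁿ and (m₁B⁽ⁱ⁾)ᵢ₌₁ⁿ be two families of volume fractions in (0,1), with m₂⁽ⁱ⁾ = 1 − m₁⁽ⁱ⁾ in each family, such that m₁A⁽ⁱ⁾ = m₁B⁽ⁱ⁾ for all i ∉ {k, k+1} and m₁A⁽ᵏ⁾ = m₁B⁽ᵏ⁺¹⁾·m₂B⁽ᵏ⁾ and m₁B⁽ᵏ⁾ = m₁A⁽ᵏ⁺¹⁾·m₂A⁽ᵏ⁾. Then: (i) m₂B⁽ᵏ⁾·m₂B⁽ᵏ⁺¹⁾ = m₂A⁽ᵏ⁾·m₂A⁽ᵏ⁺¹⁾, hence m₊A = m₊B and m₋A = m₋B; (ii) the structural parameters satisfy β_B⁽ᵏ⁾ = β_A⁽ᵏ⁺¹⁾, β_B⁽ᵏ⁺¹⁾ = β_A⁽ᵏ⁾, and β_B⁽ⁱ⁾ = β_A⁽ⁱ⁾ for all i ∉ {k, k+1}. Consequently, for any function K assigning a linear operator on Sym₃ to each unit vector, if the normal sequence (n_B⁽ⁱ⁾)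 is obtained from (n_A⁽ⁱ⁾) by swapping the entries at positions k and k+1, then Σᵢ β_B⁽ⁱ⁾ K(n_B⁽ⁱ⁾) = Σᵢ β_A⁽ⁱ⁾ K(n_A⁽ⁱ⁾); in particular the two rank-n laminates have the same transmitting tensor and the same strain energy at any given average strain. -/
open Matrix

noncomputable section

lemma prod_pair_swap {f g : ℕ → ℝ} {s : Finset ℕ} {k : ℕ}
    (hk : k ∈ s) (hk1 : k + 1 ∈ s)
    (hoff : ∀ j ∈ s, j ≠ k → j ≠ k + 1 → f j = g j)
    (hpair : f k * f (k + 1) = g k * g (k + 1)) :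
    ∏ j ∈ s, f j = ∏ j ∈ s, g j := by
  have h1 : k + 1 ∈ s.erase k := Finset.mem_erase.2 ⟨by omega, hk1⟩
  rw [← Finset.mul_prod_erase s f hk, ← Finset.mul_prod_erase _ f h1, ← mul_assoc,
      ← Finset.mul_prod_erase s g hk, ← Finset.mul_prod_erase _ g h1, ← mul_assoc, hpair]
  congr 1
  refine Finset.prod_congr rfl fun j hj => ?_
  simp only [Finset.mem_erase] at hj
  exact hoff j hj.2.2 hj.2.1 hj.1

lemma cancel_aux (a P c d : ℝ) (hd : d ≠ 0) : a / (c * d) * (P * d) = a * P / c := by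
  rw [div_mul_eq_mul_div, show a * (P * d) = a * P * d by ring, mul_div_mul_right _ _ hd]

/-- permuting two adjacent normals of a rank-n laminate (with the compensating
change of volume fractions) preserves the total volume fractions, permutes the structural
parameters β accordingly, and leaves Σᵢ β⁽ⁱ⁾ K(n⁽ⁱ⁾) (hence the transmitting tensor and the
strain energy) unchanged. -/
theorem laminate_normal_permutation
    (n : ℕ) (hn : 2 ≤ n) (k : ℕ) (hk1 : 1 ≤ k) (hk2 : k + 1 ≤ n)
    (m₁A m₁B : ℕ → ℝ)
    (hA : ∀ i ∈ Finset.Icc 1 n, m₁A i ∈ Set.Ioo (0:ℝ) 1)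
    (hB : ∀ i ∈ Finset.Icc 1 n, m₁B i ∈ Set.Ioo (0:ℝ) 1)
    (heq : ∀ i ∈ Finset.Icc 1 n, i ≠ k → i ≠ k+1 → m₁A i = m₁B i)
    (hABk : m₁A k = m₁B (k+1) * (1 - m₁B k))
    (hBAk : m₁B k = m₁A (k+1) * (1 - m₁A k))
    (mpA mpB : ℝ)
    (hmpA : mpA = ∏ j ∈ Finset.Icc 1 n, (1 - m₁A j))
    (hmpB : mpB = ∏ j ∈ Finset.Icc 1 n, (1 - m₁B j))
    (βA βB : ℕ → ℝ)
    (hβA : ∀ i, βA i = m₁A i / ((1 - mpA) * (1 - m₁A i)) * ∏ j ∈ Finset.Icc 1 i, (1 - m₁A j))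
    (hβB : ∀ i, βB i = m₁B i / ((1 - mpB) * (1 - m₁B i)) * ∏ j ∈ Finset.Icc 1 i, (1 - m₁B j)) :
    ((1 - m₁B k) * (1 - m₁B (k+1)) = (1 - m₁A k) * (1 - m₁A (k+1)) ∧ mpB = mpA
      ∧ 1 - mpB = 1 - mpA)
    ∧ (βB k = βA (k+1) ∧ βB (k+1) = βA k
        ∧ ∀ i ∈ Finset.Icc 1 n, i ≠ k → i ≠ k+1 → βB i = βA i)
    ∧ ∀ (K : (Fin 3 → ℝ) → Mat → Mat) (nA nB : ℕ → Fin 3 → ℝ),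
        (∀ i ∈ Finset.Icc 1 n, i ≠ k → i ≠ k+1 → nB i = nA i) →
        nB k = nA (k+1) → nB (k+1) = nA k →
        ∀ q : Mat,
          ∑ i ∈ Finset.Icc 1 n, βB i • K (nB i) q
            = ∑ i ∈ Finset.Icc 1 n, βA i • K (nA i) q := by
  have hkIcc : k ∈ Finset.Icc 1 n := Finset.mem_Icc.2 ⟨hk1, by omega⟩
  have hk1Icc : k + 1 ∈ Finset.Icc 1 n := Finset.mem_Icc.2 ⟨by omega, hk2⟩
  have hpair : (1 - m₁B k) * (1 - m₁B (k+1)) = (1 - m₁A k) * (1 - m₁A (k+1)) := by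
    linear_combination hABk - hBAk
  have hmp : mpB = mpA := by
    rw [hmpA, hmpB]
    exact prod_pair_swap hkIcc hk1Icc (fun j hj h1 h2 => ((heq j hj h1 h2).symm ▸ rfl)) hpair
  -- nonvanishing facts
  have hAk : (1 : ℝ) - m₁A k ≠ 0 := by have := (hA k hkIcc).2; linarith
  have hBk : (1 : ℝ) - m₁B k ≠ 0 := by have := (hB k hkIcc).2; linarith
  have hAk1 : (1 : ℝ) - m₁A (k+1) ≠ 0 := by have := (hA (k+1) hk1Icc).2; linarith
  have hBk1 : (1 : ℝ) - m₁B (k+1) ≠ 0 := by have := (hB (k+1) hk1Icc).2; linarith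
  obtain ⟨k', rfl⟩ : ∃ k', k = k' + 1 := ⟨k - 1, by omega⟩
  set k := k' + 1 with hkdef
  -- products up to k'
  have hPP : (∏ j ∈ Finset.Icc 1 k', (1 - m₁B j)) = ∏ j ∈ Finset.Icc 1 k', (1 - m₁A j) := by
    refine Finset.prod_congr rfl fun j hj => ?_
    have hj' := Finset.mem_Icc.1 hj
    rw [heq j (Finset.mem_Icc.2 ⟨hj'.1, by omega⟩) (by omega) (by omega)]
  set PA := ∏ j ∈ Finset.Icc 1 k', (1 - m₁A j) with hPA
  have hprodAk : (∏ j ∈ Finset.Icc 1 k, (1 - m₁A j)) = PA * (1 - m₁A k) := by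
    rw [Finset.prod_Icc_succ_top (by omega)]
  have hprodBk : (∏ j ∈ Finset.Icc 1 k, (1 - m₁B j)) = PA * (1 - m₁B k) := by
    rw [Finset.prod_Icc_succ_top (by omega), hPP]
  have hprodAk1 : (∏ j ∈ Finset.Icc 1 (k+1), (1 - m₁A j)) = PA * (1 - m₁A k) * (1 - m₁A (k+1)) := by
    rw [Finset.prod_Icc_succ_top (by omega), hprodAk]
  have hprodBk1 : (∏ j ∈ Finset.Icc 1 (k+1), (1 - m₁B j)) = PA * (1 - m₁B k) * (1 - m₁B (k+1)) := by
    rw [Finset.prod_Icc_succ_top (by omega), hprodBk]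
  have hβBk : βB k = βA (k+1) := by
    rw [hβB, hβA, hprodBk, hprodAk1, hmp,
        cancel_aux _ _ _ _ hBk,
        cancel_aux _ _ _ _ hAk1, hBAk]
    ring
  have hβBk1 : βB (k+1) = βA k := by
    rw [hβB, hβA, hprodBk1, hprodAk, hmp,
        cancel_aux _ _ _ _ hBk1,
        cancel_aux _ _ _ _ hAk, hABk]
    ring
  have hβoff : ∀ i ∈ Finset.Icc 1 n, i ≠ k → i ≠ k+1 → βB i = βA i := by
    intro i hi hik hik1
    have hi' := Finset.mem_Icc.1 hi
    have hm : m₁B i = m₁A i := (heq i hi hik hik1).symm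
    have hprod : (∏ j ∈ Finset.Icc 1 i, (1 - m₁B j)) = ∏ j ∈ Finset.Icc 1 i, (1 - m₁A j) := by
      by_cases hlt : i < k
      · refine Finset.prod_congr rfl fun j hj => ?_
        have hj' := Finset.mem_Icc.1 hj
        rw [heq j (Finset.mem_Icc.2 ⟨hj'.1, by omega⟩) (by omega) (by omega)]
      · have hgt : k + 1 < i := by omega
        exact prod_pair_swap (Finset.mem_Icc.2 ⟨by omega, by omega⟩)
          (Finset.mem_Icc.2 ⟨by omega, by omega⟩)
          (fun j hj h1 h2 => by
            have hj' := Finset.mem_Icc.1 hj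
            rw [heq j (Finset.mem_Icc.2 ⟨hj'.1, by omega⟩) h1 h2]) hpair
    rw [hβB, hβA, hm, hmp, hprod]
  refine ⟨⟨hpair, hmp, by rw [hmp]⟩, ⟨hβBk, hβBk1, hβoff⟩, ?_⟩
  intro K nA nB hnoff hnk hnk1 q
  refine Finset.sum_nbij' (fun a => Equiv.swap k (k+1) a) (fun a => Equiv.swap k (k+1) a)
    ?_ ?_ ?_ ?_ ?_
  · intro a ha
    rcases eq_or_ne a k with rfl | h1
    · simpa [Equiv.swap_apply_left] using hk1Icc
    rcases eq_or_ne a (k+1) with rfl | h2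
    · simpa [Equiv.swap_apply_right] using hkIcc
    · simp only [Equiv.swap_apply_of_ne_of_ne h1 h2]; exact ha
  · intro a ha
    rcases eq_or_ne a k with rfl | h1
    · simpa [Equiv.swap_apply_left] using hk1Icc
    rcases eq_or_ne a (k+1) with rfl | h2
    · simpa [Equiv.swap_apply_right] using hkIcc
    · simp only [Equiv.swap_apply_of_ne_of_ne h1 h2]; exact ha
  · intro a _; exact Equiv.swap_apply_self _ _ _
  · intro a _; exact Equiv.swap_apply_self _ _ _
  · intro a ha
    rcases eq_or_ne a k with rfl | h1
    · simp only [Equiv.swap_apply_left]; rw [hβBk, hnk]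
    rcases eq_or_ne a (k+1) with rfl | h2
    · simp only [Equiv.swap_apply_right]; rw [hβBk1, hnk1]
    · simp only [Equiv.swap_apply_of_ne_of_ne h1 h2]
      rw [hβoff a ha h1 h2, hnoff a ha h1 h2]
end
end

section
/- Let μ₋ > 0, 0 ≤ ν₋ < 1/2, and let q ∈ Sym₃ have minimal and maximal eigenvalues q_min < q_max with unit eigenvectors e_min, e_max. Suppose either q_min·q_max < 0, or q_min·q_max > 0 and (1−ν₋)·min(|q_min|,|q_max|) < ν₋·max(|q_min|,|q_max|). Then the maximum of 𝒦₋(n,q) over all unit vectors n ∈ ℝ³ equals ((1−ν₋)/(2μ₋))(q_max² + q_min²) − (ν₋/μ₋)·q_max·q_min, and it is attained at any unit vector n* = n_max·e_max + n_min·e_min with n_max² = ((1−ν₋)q_max − ν₋q_min)/(q_max − q_min) and n_min² = (ν₋q_max − (1−ν₋)q_min)/(q_max − q_min); moreover for such n*, K₋(n*):q = ((q_max − q_min)/(2μ₋))·(n_max²·e_max⊗e_max − n_min²·e_min⊗e_min). -/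
open Matrix

noncomputable section

lemma trace_mul_vecMulVec' (q : Mat) (u v : Fin 3 → ℝ) :
    (q * vecMulVec u v).trace = v ⬝ᵥ q.mulVec u := by
  simp [Matrix.trace, Matrix.diag, Matrix.mul_apply, Matrix.vecMulVec_apply,
    dotProduct, Matrix.mulVec, Fin.sum_univ_three]
  ring

lemma dot_symm' (q : Mat) (hq : q.IsSymm) (x y : Fin 3 → ℝ) :
    x ⬝ᵥ q.mulVec y = y ⬝ᵥ q.mulVec x := by
  rw [dotProduct_mulVec, ← vecMul_transpose, hq, dotProduct_comm]

lemma dot_self_nonneg' (v : Fin 3 → ℝ) : 0 ≤ v ⬝ᵥ v :=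
  Finset.sum_nonneg fun i _ => mul_self_nonneg _

lemma inn_Kop' (μ ν : ℝ) (n : Fin 3 → ℝ) (q : Mat) (hq : q.IsSymm) :
    inn q (Kop μ ν n q)
      = (1/(2*μ)) * (2*(q.mulVec n ⬝ᵥ q.mulVec n) - (n ⬝ᵥ q.mulVec n)^2/(1-ν)) := by
  rw [inn, Kop, Matrix.mul_smul, Matrix.trace_smul, Matrix.mul_sub, Matrix.mul_add,
    Matrix.mul_smul, Matrix.trace_sub, Matrix.trace_add, Matrix.trace_smul,
    trace_mul_vecMulVec', trace_mul_vecMulVec', trace_mul_vecMulVec',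
    dot_symm' q hq n (q.mulVec n)]
  simp only [smul_eq_mul]
  ring

lemma spec_bound' (q : Mat) (hq : q.IsSymm) (qmin qmax : ℝ) (hlt : qmin < qmax)
    (hray : ∀ v : Fin 3 → ℝ,
      qmin * (v ⬝ᵥ v) ≤ v ⬝ᵥ q.mulVec v ∧ v ⬝ᵥ q.mulVec v ≤ qmax * (v ⬝ᵥ v))
    (n : Fin 3 → ℝ) (hn : n ⬝ᵥ n = 1) :
    q.mulVec n ⬝ᵥ q.mulVec n ≤ (qmax+qmin)*(n ⬝ᵥ q.mulVec n) - qmax*qmin := by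
  set t := n ⬝ᵥ q.mulVec n with htd
  set N := q.mulVec n ⬝ᵥ q.mulVec n with hNd
  have hun : q.mulVec n ⬝ᵥ n = t := by rw [dotProduct_comm, ← htd]
  set w := q.mulVec n - ((qmax+qmin)/2) • n with hwd
  have hnw : n ⬝ᵥ w = t - (qmax+qmin)/2 := by
    rw [hwd]
    simp only [dotProduct_sub, dotProduct_smul, smul_eq_mul, hn, ← htd]
    ring
  have hwn : w ⬝ᵥ n = t - (qmax+qmin)/2 := by rw [dotProduct_comm]; exact hnw
  have hwqn : w ⬝ᵥ q.mulVec n = N - ((qmax+qmin)/2)*t := by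
    rw [hwd]
    simp only [sub_dotProduct, smul_dotProduct, smul_eq_mul, ← htd, ← hNd]
  have hnqw : n ⬝ᵥ q.mulVec w = N - ((qmax+qmin)/2)*t := by
    rw [dot_symm' q hq]; exact hwqn
  have hww : w ⬝ᵥ w = N - (qmax+qmin)*t + ((qmax+qmin)/2)^2 := by
    rw [hwd]
    simp only [dotProduct_sub, sub_dotProduct, dotProduct_smul, smul_dotProduct,
      smul_eq_mul, hn, ← htd, ← hNd, hun]
    ring
  have hWnn : 0 ≤ w ⬝ᵥ w := dot_self_nonneg' w
  rw [hww] at hWnn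
  have key : ∀ c : ℝ, 4*c*(N - (qmax+qmin)*t + ((qmax+qmin)/2)^2)
      ≤ (qmax - qmin)*(c^2 + (N - (qmax+qmin)*t + ((qmax+qmin)/2)^2)) := by
    intro c
    have h1 := (hray (c • n + w)).2
    have h2 := (hray (c • n - w)).1
    simp only [Matrix.mulVec_add, Matrix.mulVec_sub, Matrix.mulVec_smul,
      dotProduct_add, add_dotProduct, dotProduct_sub, sub_dotProduct,
      dotProduct_smul, smul_dotProduct, smul_eq_mul, hn, ← htd,
      hnw, hwn, hnqw, hwqn, hww, hun] at h1 h2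
    linarith
  have hD : 0 < qmax - qmin := sub_pos.2 hlt
  set W := N - (qmax+qmin)*t + ((qmax+qmin)/2)^2 with hWd
  clear_value W
  have h4 : 4*W^2 ≤ (qmax-qmin)^2*W := by
    have h := key (2*W/(qmax-qmin))
    have h5 := mul_le_mul_of_nonneg_left h (le_of_lt hD)
    have e1 : (qmax-qmin) * (4*(2*W/(qmax-qmin))*W) = 8*W^2 := by
      field_simp
      ring
    have e2 : (qmax-qmin)*((qmax-qmin)*((2*W/(qmax-qmin))^2 + W))
        = 4*W^2 + (qmax-qmin)^2*W := by
      field_simp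
      ring
    rw [e1, e2] at h5
    linarith
  have hWle : W ≤ (qmax-qmin)^2/4 := by
    rcases eq_or_lt_of_le hWnn with h0 | h0
    · rw [← h0]; positivity
    · nlinarith [h4, h0]
  linarith [hWle]

/-- maximization of 𝒦₋(n,q) = q:(K₋(n):q) over unit normals in the
"inclined" regime: the maximum equals ((1−ν)/(2μ))(q_max² + q_min²) − (ν/μ)q_max·q_min,
attained at all n* = n_max e_max + n_min e_min with the prescribed squared components,
and K₋(n*):q is diagonal in the eigenbasis of q. -/
theorem Kform_max_inclined
    (μm νm : ℝ) (hμ : 0 < μm) (hν0 : 0 ≤ νm) (hν : νm < 1/2)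
    (q : Mat) (hq : q.IsSymm)
    (qmin qmax : ℝ) (hlt : qmin < qmax)
    (emin emax : Fin 3 → ℝ) (hemin : emin ⬝ᵥ emin = 1) (hemax : emax ⬝ᵥ emax = 1)
    (heigmin : q.mulVec emin = qmin • emin) (heigmax : q.mulVec emax = qmax • emax)
    (hray : ∀ v : Fin 3 → ℝ,
      qmin * (v ⬝ᵥ v) ≤ v ⬝ᵥ q.mulVec v ∧ v ⬝ᵥ q.mulVec v ≤ qmax * (v ⬝ᵥ v))
    (hcase : qmin * qmax < 0 ∨
      (0 < qmin * qmax ∧ (1-νm) * min |qmin| |qmax| < νm * max |qmin| |qmax|)) :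
    (∀ nvec : Fin 3 → ℝ, nvec ⬝ᵥ nvec = 1 →
        inn q (Kop μm νm nvec q)
          ≤ (1-νm)/(2*μm) * (qmax^2 + qmin^2) - νm/μm * (qmax*qmin))
    ∧ ∀ a b : ℝ,
        a^2 = ((1-νm)*qmax - νm*qmin)/(qmax - qmin) →
        b^2 = (νm*qmax - (1-νm)*qmin)/(qmax - qmin) →
        ((a • emax + b • emin) ⬝ᵥ (a • emax + b • emin) = 1)
        ∧ inn q (Kop μm νm (a • emax + b • emin) q)
            = (1-νm)/(2*μm) * (qmax^2 + qmin^2) - νm/μm * (qmax*qmin)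
        ∧ Kop μm νm (a • emax + b • emin) q
            = ((qmax - qmin)/(2*μm)) •
                (a^2 • vecMulVec emax emax - b^2 • vecMulVec emin emin) := by
  have h1ν : 0 < 1 - νm := by linarith
  have hD : (0:ℝ) < qmax - qmin := sub_pos.2 hlt
  have hDne : qmax - qmin ≠ 0 := ne_of_gt hD
  constructor
  · intro nvec hn
    have hb := spec_bound' q hq qmin qmax hlt hray nvec hn
    rw [inn_Kop' μm νm nvec q hq]
    set t := nvec ⬝ᵥ q.mulVec nvec with htd
    set N := q.mulVec nvec ⬝ᵥ q.mulVec nvec with hNd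
    clear_value t N
    have expand : (1-νm)/(2*μm) * (qmax^2 + qmin^2) - νm/μm * (qmax*qmin)
        - (1/(2*μm)) * (2*N - t^2/(1-νm))
        = (1/(2*μm*(1-νm))) * ((t - (1-νm)*(qmax+qmin))^2
            + 2*(1-νm)*((qmax+qmin)*t - qmax*qmin - N)) := by
      field_simp
      ring
    have hpos : 0 ≤ (1/(2*μm*(1-νm))) * ((t - (1-νm)*(qmax+qmin))^2
        + 2*(1-νm)*((qmax+qmin)*t - qmax*qmin - N)) := by
      apply mul_nonneg
      · positivity
      · have h1 := sq_nonneg (t - (1-νm)*(qmax+qmin))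
        nlinarith [hb, h1ν]
    linarith [expand, hpos]
  · intro a b ha hb
    have horth : emax ⬝ᵥ emin = 0 := by
      have h := dot_symm' q hq emax emin
      rw [heigmin, heigmax, dotProduct_smul, dotProduct_smul,
        dotProduct_comm emin emax] at h
      have h2 : (qmin - qmax) * (emax ⬝ᵥ emin) = 0 := by
        simp only [smul_eq_mul] at h; linarith [h]
      rcases mul_eq_zero.mp h2 with h3 | h3
      · exact absurd h3 (by intro hc; linarith)
      · exact h3
    have horth' : emin ⬝ᵥ emax = 0 := by rw [dotProduct_comm]; exact horth
    have hab : a^2 + b^2 = 1 := by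
      rw [ha, hb]
      field_simp
      ring
    have hqnv : q.mulVec (a • emax + b • emin)
        = (a*qmax) • emax + (b*qmin) • emin := by
      rw [Matrix.mulVec_add, Matrix.mulVec_smul, Matrix.mulVec_smul,
        heigmin, heigmax, smul_smul, smul_smul]
    have hsum : a^2*qmax + b^2*qmin = (1-νm)*(qmax+qmin) := by
      rw [ha, hb]; field_simp; ring
    have hunit : (a • emax + b • emin) ⬝ᵥ (a • emax + b • emin) = 1 := by
      simp only [dotProduct_add, add_dotProduct, dotProduct_smul, smul_dotProduct,
        smul_eq_mul, hemin, hemax, horth, horth']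
      linear_combination hab
    have ht : (a • emax + b • emin) ⬝ᵥ q.mulVec (a • emax + b • emin)
        = (1-νm)*(qmax+qmin) := by
      rw [hqnv]
      simp only [dotProduct_add, add_dotProduct, dotProduct_smul, smul_dotProduct,
        smul_eq_mul, hemin, hemax, horth, horth']
      linear_combination hsum
    have hN2 : q.mulVec (a • emax + b • emin) ⬝ᵥ q.mulVec (a • emax + b • emin)
        = a^2*qmax^2 + b^2*qmin^2 := by
      rw [hqnv]
      simp only [dotProduct_add, add_dotProduct, dotProduct_smul, smul_dotProduct,
        smul_eq_mul, hemin, hemax, horth, horth']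
      ring
    have hsq : a^2*qmax^2 + b^2*qmin^2
        = (1-νm)*(qmax^2+qmax*qmin+qmin^2) - νm*qmax*qmin := by
      rw [ha, hb]; field_simp; ring
    refine ⟨hunit, ?_, ?_⟩
    · rw [inn_Kop' μm νm _ q hq, ht, hN2, hsq]
      field_simp
      ring
    · rw [Kop, ht, hqnv]
      ext i j
      simp only [Matrix.smul_apply, Matrix.add_apply, Matrix.sub_apply,
        Matrix.vecMulVec_apply, Pi.add_apply, Pi.smul_apply, smul_eq_mul]
      field_simp
      ring
end
end

section
/- Let μ₋ > 0, ν₋ < 1, let n ∈ ℝ³ be a unit vector, and let q ∈ Sym₃ have an orthonormal eigenbasis e₁, e₂, e₃ with eigenvalues q₁, q₂, q₃; write nᵢ = n·eᵢ and q_nn = n·q·n. Then for all i, j: eᵢ·(K₋(n):q)·eⱼ = (1/(2μ₋))·(qᵢ + qⱼ − q_nn/(1−ν₋))·nᵢnⱼ. Consequently, the matrices q and K₋(n):q have the common eigenvectors e₁, e₂, e₃ if and only if (qᵢ + qⱼ − q_nn/(1−ν₋))·nᵢnⱼ = 0 for all i ≠ j. -/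
open Matrix

noncomputable section

lemma vmv_mulVec (a b v : Fin 3 → ℝ) : (vecMulVec a b).mulVec v = (b ⬝ᵥ v) • a := by
  funext i
  simp [vecMulVec_apply, mulVec, dotProduct, Finset.mul_sum, mul_comm, mul_assoc, mul_left_comm]

/-- components of K₋(n):q in an orthonormal eigenbasis of q:
eᵢ·(K₋(n):q)·eⱼ = (1/(2μ))(qᵢ + qⱼ − q_nn/(1−ν)) nᵢnⱼ; consequently q and K₋(n):q have the
common eigenvectors e₁,e₂,e₃ iff the off-diagonal factors vanish. -/
theorem Kop_components_eigenbasis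
    (μm νm : ℝ) (hμ : 0 < μm) (hν : νm < 1)
    (n : Fin 3 → ℝ) (hn : n ⬝ᵥ n = 1)
    (q : Mat) (hq : q.IsSymm)
    (e : Fin 3 → (Fin 3 → ℝ)) (ev : Fin 3 → ℝ)
    (horth : ∀ i j, e i ⬝ᵥ e j = if i = j then (1:ℝ) else 0)
    (heig : ∀ i, q.mulVec (e i) = ev i • e i) :
    (∀ i j, e i ⬝ᵥ (Kop μm νm n q).mulVec (e j)
        = 1/(2*μm) * (ev i + ev j - (n ⬝ᵥ q.mulVec n)/(1-νm)) * ((n ⬝ᵥ e i) * (n ⬝ᵥ e j)))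
    ∧ ((∀ i, ∃ c : ℝ, (Kop μm νm n q).mulVec (e i) = c • e i)
        ↔ ∀ i j, i ≠ j →
            (ev i + ev j - (n ⬝ᵥ q.mulVec n)/(1-νm)) * ((n ⬝ᵥ e i) * (n ⬝ᵥ e j)) = 0) := by
  have hsym : ∀ a b : Fin 3 → ℝ, a ⬝ᵥ q.mulVec b = q.mulVec a ⬝ᵥ b := by
    intro a b
    rw [dotProduct_mulVec, ← mulVec_transpose, hq]
  have hen : ∀ i, e i ⬝ᵥ q.mulVec n = ev i * (n ⬝ᵥ e i) := by
    intro i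
    rw [hsym, heig, smul_dotProduct, dotProduct_comm]
    rfl
  have key : ∀ i j, e i ⬝ᵥ (Kop μm νm n q).mulVec (e j)
      = 1/(2*μm) * (ev i + ev j - (n ⬝ᵥ q.mulVec n)/(1-νm)) * ((n ⬝ᵥ e i) * (n ⬝ᵥ e j)) := by
    intro i j
    have h2 : q.mulVec n ⬝ᵥ e j = ev j * (n ⬝ᵥ e j) := by
      rw [dotProduct_comm]; exact hen j
    rw [Kop, smul_mulVec, sub_mulVec, add_mulVec, smul_mulVec,
      vmv_mulVec, vmv_mulVec, vmv_mulVec]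
    simp only [dotProduct_smul, dotProduct_sub, dotProduct_add, smul_eq_mul]
    rw [hen i, h2, dotProduct_comm (e i) n]
    ring
  refine ⟨key, ?_, ?_⟩
  · intro h i j hij
    obtain ⟨c, hc⟩ := h j
    have h0 : e i ⬝ᵥ (Kop μm νm n q).mulVec (e j) = 0 := by
      rw [hc, dotProduct_smul, horth, if_neg hij, smul_eq_mul, mul_zero]
    rw [key i j] at h0
    have hne : 1/(2*μm) ≠ 0 := by positivity
    rcases mul_eq_zero.mp h0 with h1 | h1
    · rcases mul_eq_zero.mp h1 with h2 | h2
      · exact absurd h2 hne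
      · rw [h2, zero_mul]
    · rw [h1, mul_zero]
  · intro h j
    -- orthonormality gives invertibility
    set M : Mat := Matrix.of e with hM
    have hMM : M * Mᵀ = 1 := by
      ext i k
      simp only [mul_apply, transpose_apply, one_apply, hM, Matrix.of_apply]
      rw [← horth i k]
      rfl
    have hMM' : Mᵀ * M = 1 := mul_eq_one_comm.mp hMM
    have hzero : ∀ v : Fin 3 → ℝ, (∀ i, e i ⬝ᵥ v = 0) → v = 0 := by
      intro v hv
      have hMv : M.mulVec v = 0 := by
        funext i
        exact hv i
      calc v = (Mᵀ * M).mulVec v := by rw [hMM', one_mulVec]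
        _ = Mᵀ.mulVec (M.mulVec v) := by rw [mulVec_mulVec]
        _ = 0 := by rw [hMv, mulVec_zero]
    refine ⟨e j ⬝ᵥ (Kop μm νm n q).mulVec (e j), ?_⟩
    have := hzero ((Kop μm νm n q).mulVec (e j)
        - (e j ⬝ᵥ (Kop μm νm n q).mulVec (e j)) • e j) ?_
    · exact sub_eq_zero.mp this
    · intro i
      rw [dotProduct_sub, dotProduct_smul, horth, smul_eq_mul]
      by_cases hij : i = j
      · subst hij
        rw [if_pos rfl, mul_one, sub_self]
      · rw [if_neg hij, mul_zero, sub_zero, key i j, mul_assoc, h i j hij, mul_zero]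
end
end

section
/- Let μ₋ > 0, ν₋ < 1, let n⁽¹⁾, n⁽²⁾ ∈ ℝ³ be non-parallel unit vectors, let τ = n⁽¹⁾ × n⁽²⁾, and let q ∈ Sym₃ and β ∈ ℝ. Then τ·(((βK₋(n⁽¹⁾) + (1−β)K₋(n⁽²⁾)):q))·τ = 0. In particular, if the difference of the strains averaged over the two phases of a second-rank laminate is ε̄₊ − ε̄₋ = −(βK₋(n⁽¹⁾) + (1−β)K₋(n⁽²⁾)):q₊, then the compatibility condition (ε̄₊ − ε̄₋):(τ⊗τ) = 0 holds for every vector τ parallel to n⁽¹⁾ × n⁽²⁾. -/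
open Matrix

noncomputable section

lemma K_zero (μ ν : ℝ) (n τ : Fin 3 → ℝ) (q : Mat) (h : n ⬝ᵥ τ = 0) :
    τ ⬝ᵥ (Kop μ ν n q).mulVec τ = 0 := by
  have h' : τ ⬝ᵥ n = 0 := by rwa [dotProduct_comm]
  simp [Kop, smul_mulVec, sub_mulVec, add_mulVec, vmv_mulVec, h, h']

lemma inn_vecMulVec (a : Mat) (t : Fin 3 → ℝ) : inn a (vecMulVec t t) = t ⬝ᵥ a.mulVec t := by
  simp [inn, vecMulVec, trace, dotProduct, mulVec, Matrix.mul_apply, Fin.sum_univ_three,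
    Matrix.diag]
  ring

lemma cross_perp (n₁ n₂ : Fin 3 → ℝ) :
    n₁ ⬝ᵥ crossProduct n₁ n₂ = 0 ∧ n₂ ⬝ᵥ crossProduct n₁ n₂ = 0 := by
  constructor <;> simp [crossProduct, dotProduct, Fin.sum_univ_three] <;> ring

/-- for τ = n⁽¹⁾ × n⁽²⁾ one has τ·((βK₋(n⁽¹⁾) + (1−β)K₋(n⁽²⁾)):q)·τ = 0;
in particular the strain difference ε̄₊ − ε̄₋ = −(βK₋(n⁽¹⁾)+(1−β)K₋(n⁽²⁾)):q₊ of a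
second-rank laminate satisfies the compatibility condition (ε̄₊ − ε̄₋):(τ'⊗τ') = 0 for every
vector τ' parallel to n⁽¹⁾ × n⁽²⁾. -/
theorem second_rank_compatibility
    (μm νm : ℝ) (hμ : 0 < μm) (hν : νm < 1)
    (n₁ n₂ : Fin 3 → ℝ) (hn₁ : n₁ ⬝ᵥ n₁ = 1) (hn₂ : n₂ ⬝ᵥ n₂ = 1)
    (hpar : ¬ ∃ c : ℝ, n₂ = c • n₁)
    (τ : Fin 3 → ℝ) (hτ : τ = crossProduct n₁ n₂)
    (q : Mat) (β : ℝ) :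
    τ ⬝ᵥ ((β • Kop μm νm n₁ q + (1-β) • Kop μm νm n₂ q).mulVec τ) = 0
    ∧ ∀ (qp dε : Mat),
        dε = -(β • Kop μm νm n₁ qp + (1-β) • Kop μm νm n₂ qp) →
        ∀ c : ℝ, inn dε (vecMulVec (c • τ) (c • τ)) = 0 := by
  have h1 : n₁ ⬝ᵥ τ = 0 := hτ ▸ (cross_perp n₁ n₂).1
  have h2 : n₂ ⬝ᵥ τ = 0 := hτ ▸ (cross_perp n₁ n₂).2
  have key : ∀ p : Mat,
      τ ⬝ᵥ ((β • Kop μm νm n₁ p + (1-β) • Kop μm νm n₂ p).mulVec τ) = 0 := by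
    intro p
    simp [add_mulVec, smul_mulVec, K_zero _ _ _ _ _ h1, K_zero _ _ _ _ _ h2]
  refine ⟨key q, ?_⟩
  intro qp dε hdε c
  rw [inn_vecMulVec, hdε]
  simp only [neg_mulVec, dotProduct_neg, smul_dotProduct, dotProduct_smul, mulVec_smul]
  rw [key qp]
  simp
end
end

section
/- Let Ω = (0,1)³ ⊂ ℝ³, let A ∈ Sym₃, and let u : ℝ³ → ℝ³ be continuously differentiable with u(x) = A·x for every x ∈ ∂Ω. Let ε(x) = (1/2)(Du(x) + Du(x)ᵀ) be the symmetric gradient. Then ∫_Ω (ε₂₃(x)² − ε₂₂(x)ε₃₃(x)) dx ≥ A₂₃² − A₂₂A₃₃. -/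
open Matrix

noncomputable section

/-- The symmetrized gradient ε(x) = (1/2)(Du(x) + Du(x)ᵀ), entrywise. -/
def symGrad (u : (Fin 3 → ℝ) → (Fin 3 → ℝ)) (x : Fin 3 → ℝ) (i j : Fin 3) : ℝ :=
  (1/2) * (fderiv ℝ u x (Pi.single j 1) i + fderiv ℝ u x (Pi.single i 1) j)

/-- The open unit cube Ω = (0,1)³. -/
def unitCube : Set (Fin 3 → ℝ) := Set.univ.pi fun _ : Fin 3 => Set.Ioo (0:ℝ) 1

/-!
Pointwise, `ε₂₃² - ε₂₂ ε₃₃ = (∂₃u₂ - ∂₂u₃)² / 4 - (∂₂u₂ ∂₃u₃ - ∂₃u₂ ∂₂u₃)` (indices 1, 2 in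
`Fin 3`), so it suffices to show that the integral of the Jacobian minor equals
`A₂₂ A₃₃ - A₂₃ A₃₂`. For `f ∈ C¹`, `g ∈ C²` the minor `∂ᵢf ∂ⱼg - ∂ⱼf ∂ᵢg` is the divergence of
`f ∂ⱼg eᵢ - f ∂ᵢg eⱼ` (symmetry of second derivatives), so by the divergence theorem its integral
over a box is a sum of face integrals; mollifying `g` extends this to `g ∈ C¹` by bounded
convergence. On a face of the cube `u = A x`, and the derivatives of `u` tangent to the face are
those of `A x`, so the face integrals only see `A`.
-/

open MeasureTheory Set Filter
open scoped Topology Convolution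

section Derivatives

variable {E : Type*} [NormedAddCommGroup E] [NormedSpace ℝ E]

def jacMinor (f g : E → ℝ) (v w x : E) : ℝ :=
  fderiv ℝ f x v * fderiv ℝ g x w - fderiv ℝ f x w * fderiv ℝ g x v

theorem jacMinor_eq_fderiv_sub_fderiv {f g : E → ℝ} {x : E} (hf : DifferentiableAt ℝ f x)
    (hg : ContDiffAt ℝ 2 g x) (v w : E) :
    jacMinor f g v w x = fderiv ℝ (fun y => f y * fderiv ℝ g y w) x v
      - fderiv ℝ (fun y => f y * fderiv ℝ g y v) x w := by
  have hg' : DifferentiableAt ℝ (fderiv ℝ g) x :=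
    (hg.fderiv_right le_rfl).differentiableAt one_ne_zero
  have hsymm := (hg.isSymmSndFDerivAt (by simp)).eq v w
  rw [fderiv_fun_mul hf (hg'.clm_apply (differentiableAt_const _)),
    fderiv_fun_mul hf (hg'.clm_apply (differentiableAt_const _)),
    fderiv_clm_apply hg' (differentiableAt_const _),
    fderiv_clm_apply hg' (differentiableAt_const _)]
  simp only [jacMinor, fderiv_fun_const, Pi.zero_apply, ContinuousLinearMap.comp_zero, zero_add,
    _root_.add_apply, _root_.smul_apply, ContinuousLinearMap.flip_apply, hsymm, smul_eq_mul]
  ring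

theorem DifferentiableAt.fderiv_apply_eq_of_eventually_eq_clm {F : Type*} [NormedAddCommGroup F]
    [NormedSpace ℝ F] {u : E → F} {x v : E}
    (hu : DifferentiableAt ℝ u x) (L : E →L[ℝ] F)
    (h : (fun t : ℝ => u (x + t • v)) =ᶠ[𝓝 0] fun t => L (x + t • v)) :
    fderiv ℝ u x v = L v := by
  rw [← hu.lineDeriv_eq_fderiv, lineDeriv, h.deriv_eq, ← lineDeriv,
    L.differentiableAt.lineDeriv_eq_fderiv, L.fderiv]

end Derivatives

section Mollification

variable {E : Type*} [NormedAddCommGroup E] [NormedSpace ℝ E] [FiniteDimensional ℝ E]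

theorem ContDiffBump.norm_normed_convolution_le [MeasurableSpace E] [BorelSpace E]
    {μ : Measure E} [μ.IsAddHaarMeasure] (φ : ContDiffBump (0 : E)) {h : E → ℝ}
    (hh : Continuous h) {C : ℝ} (hC : ∀ y, ‖h y‖ ≤ C) (x : E) :
    ‖(φ.normed μ ⋆[ContinuousLinearMap.lsmul ℝ ℝ, μ] h) x‖ ≤ 3 * C := by
  have hdist := φ.dist_normed_convolution_le (μ := μ) (x₀ := x) hh.aestronglyMeasurable
    fun y _ => (dist_le_norm_add_norm _ _).trans (add_le_add (hC y) (hC x))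
  linarith [norm_le_norm_add_norm_sub' ((φ.normed μ ⋆[ContinuousLinearMap.lsmul ℝ ℝ, μ] h) x) (h x),
    dist_eq_norm ((φ.normed μ ⋆[ContinuousLinearMap.lsmul ℝ ℝ, μ] h) x) (h x), hC x]

theorem exists_contDiff_two_tendsto_fderiv {g : E → ℝ} (hg : ContDiff ℝ 1 g)
    (hcs : HasCompactSupport g) :
    ∃ W : ℕ → E → ℝ, (∀ k, ContDiff ℝ 2 (W k)) ∧
      (∀ x v, Tendsto (fun k => fderiv ℝ (W k) x v) atTop (𝓝 (fderiv ℝ g x v))) ∧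
      ∀ v, ∃ C, ∀ k x, ‖fderiv ℝ (W k) x v‖ ≤ C := by
  borelize E
  let μ : Measure E := Measure.addHaar
  let φ : ℕ → ContDiffBump (0 : E) := fun k =>
    ⟨1 / ((k : ℝ) + 1) / 2, 1 / ((k : ℝ) + 1), by positivity, half_lt_self (by positivity)⟩
  have hφ : Tendsto (fun k => (φ k).rOut) atTop (𝓝 0) := tendsto_one_div_add_atTop_nhds_zero_nat
  have hDg : Continuous (fderiv ℝ g) := hg.continuous_fderiv one_ne_zero
  have hDg_v : ∀ v, Continuous fun y => fderiv ℝ g y v := fun v => hDg.clm_apply continuous_const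
  have hfderiv : ∀ k x v, fderiv ℝ ((φ k).normed μ ⋆[ContinuousLinearMap.lsmul ℝ ℝ, μ] g) x v =
      ((φ k).normed μ ⋆[ContinuousLinearMap.lsmul ℝ ℝ, μ] fun y => fderiv ℝ g y v) x := by
    intro k x v
    rw [(hcs.hasFDerivAt_convolution_right _ (φ k).integrable_normed.locallyIntegrable hg x).fderiv]
    exact convolution_precompR_apply _ (φ k).integrable_normed.locallyIntegrable
      (hcs.fderiv (𝕜 := ℝ)) hDg x v
  refine ⟨fun k => (φ k).normed μ ⋆[ContinuousLinearMap.lsmul ℝ ℝ, μ] g, fun k => ?_,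
    fun x v => ?_, fun v => ?_⟩
  · exact (φ k).hasCompactSupport_normed.contDiff_convolution_left _ (φ k).contDiff_normed
      hg.continuous.locallyIntegrable
  · simpa only [hfderiv] using ContDiffBump.convolution_tendsto_right_of_continuous hφ (hDg_v v) x
  · obtain ⟨C, hC⟩ := (hcs.fderiv_apply (𝕜 := ℝ) v).exists_bound_of_continuous (hDg_v v)
    exact ⟨3 * C, fun k x => by
      rw [hfderiv]; exact (φ k).norm_normed_convolution_le (hDg_v v) hC x⟩

theorem IsCompact.exists_contDiff_hasCompactSupport_eventuallyEq {K : Set E} (hK : IsCompact K)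
    {g : E → ℝ} {m : ℕ∞} (hg : ContDiff ℝ m g) :
    ∃ g' : E → ℝ, ContDiff ℝ m g' ∧ HasCompactSupport g' ∧ ∀ x ∈ K, g' =ᶠ[𝓝 x] g := by
  obtain ⟨R, hR, hKR⟩ := hK.isBounded.subset_ball_lt 0 0
  let χ : ContDiffBump (0 : E) := ⟨R, R + 1, hR, lt_add_one R⟩
  refine ⟨fun x => χ x * g x, χ.contDiff.mul hg, χ.hasCompactSupport.mul_right, fun x hx => ?_⟩
  filter_upwards [Metric.isOpen_ball.mem_nhds (hKR hx)] with y hy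
  rw [χ.one_of_mem_closedBall (Metric.ball_subset_closedBall hy), one_mul]

end Mollification

theorem IsCompact.tendsto_setIntegral_of_bounded {X : Type*} [TopologicalSpace X]
    [MeasurableSpace X] [OpensMeasurableSpace X] [T2Space X] {μ : Measure X}
    [IsFiniteMeasureOnCompacts μ] {s : Set X} (hs : IsCompact s) {F : ℕ → X → ℝ} {G : X → ℝ}
    (hF : ∀ k, ContinuousOn (F k) s) (hb : ∃ C, ∀ k, ∀ x ∈ s, ‖F k x‖ ≤ C)
    (hlim : ∀ x ∈ s, Tendsto (fun k => F k x) atTop (𝓝 (G x))) :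
    Tendsto (fun k => ∫ x in s, F k x ∂μ) atTop (𝓝 (∫ x in s, G x ∂μ)) := by
  have : IsFiniteMeasure (μ.restrict s) := isFiniteMeasure_restrict.2 hs.measure_lt_top.ne
  obtain ⟨C, hC⟩ := hb
  exact tendsto_integral_filter_of_norm_le_const
    (Eventually.of_forall fun k => (hF k).aestronglyMeasurable hs.measurableSet)
    ⟨C, Eventually.of_forall fun k => (ae_restrict_iff' hs.measurableSet).2
      (Eventually.of_forall (hC k))⟩
    ((ae_restrict_iff' hs.measurableSet).2 (Eventually.of_forall hlim))

section Box

variable {n : ℕ} {a b : Fin (n + 1) → ℝ}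

/-- The flux of the field `φ • eᵢ` out of the box `[a, b]`, i.e. the `i`-th summand of the
divergence theorem. -/
def boxFlux (a b : Fin (n + 1) → ℝ) (i : Fin (n + 1)) (φ : (Fin (n + 1) → ℝ) → ℝ) : ℝ :=
  (∫ y in Icc (a ∘ i.succAbove) (b ∘ i.succAbove), φ (i.insertNth (b i) y)) -
    ∫ y in Icc (a ∘ i.succAbove) (b ∘ i.succAbove), φ (i.insertNth (a i) y)

theorem boxFlux_congr (hab : a ≤ b) (i : Fin (n + 1)) {φ ψ : (Fin (n + 1) → ℝ) → ℝ}
    (h : EqOn φ ψ (Icc a b)) : boxFlux a b i φ = boxFlux a b i ψ := by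
  have face : ∀ c ∈ Icc (a i) (b i),
      ∫ y in Icc (a ∘ i.succAbove) (b ∘ i.succAbove), φ (i.insertNth c y) =
        ∫ y in Icc (a ∘ i.succAbove) (b ∘ i.succAbove), ψ (i.insertNth c y) := fun c hc =>
    setIntegral_congr_fun measurableSet_Icc fun y hy => h (Fin.insertNth_mem_Icc.2 ⟨hc, hy⟩)
  rw [boxFlux, boxFlux, face _ ⟨hab i, le_rfl⟩, face _ ⟨le_rfl, hab i⟩]

theorem boxFlux_zero_one_eq (i : Fin (n + 1)) {φ : (Fin (n + 1) → ℝ) → ℝ}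
    (hφ : Continuous φ) {c : ℝ}
    (h : ∀ y ∈ univ.pi fun _ : Fin n => Ioo (0 : ℝ) 1,
      φ (i.insertNth 1 y) - φ (i.insertNth 0 y) = c) :
    boxFlux 0 1 i φ = c := by
  have hint : ∀ c : ℝ, IntegrableOn (fun y => φ (i.insertNth c y)) (Icc (0 : Fin n → ℝ) 1) :=
    fun c => (hφ.comp (continuous_const.finInsertNth i continuous_id)).continuousOn
      |>.integrableOn_compact isCompact_Icc
  have hae : (univ.pi fun _ : Fin n => Ioo (0 : ℝ) 1) =ᵐ[volume] Icc (0 : Fin n → ℝ) 1 :=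
    Measure.univ_pi_Ioo_ae_eq_Icc
  simp only [boxFlux, Pi.zero_comp, Pi.one_comp, Pi.zero_apply, Pi.one_apply]
  rw [← integral_sub (hint 1) (hint 0), ← setIntegral_congr_set hae,
    setIntegral_congr_fun (MeasurableSet.univ_pi fun _ => measurableSet_Ioo) h, setIntegral_const,
    measureReal_def, measure_congr hae, Real.volume_Icc_pi_toReal zero_le_one]
  simp

theorem tendsto_boxFlux (hab : a ≤ b) (i : Fin (n + 1)) {φ : ℕ → (Fin (n + 1) → ℝ) → ℝ}
    {ψ : (Fin (n + 1) → ℝ) → ℝ} (hφ : ∀ k, Continuous (φ k))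
    (hb : ∃ C, ∀ k, ∀ x ∈ Icc a b, ‖φ k x‖ ≤ C)
    (hlim : ∀ x ∈ Icc a b, Tendsto (fun k => φ k x) atTop (𝓝 (ψ x))) :
    Tendsto (fun k => boxFlux a b i (φ k)) atTop (𝓝 (boxFlux a b i ψ)) := by
  have face : ∀ c ∈ Icc (a i) (b i), Tendsto
      (fun k => ∫ y in Icc (a ∘ i.succAbove) (b ∘ i.succAbove), φ k (i.insertNth c y))
      atTop (𝓝 (∫ y in Icc (a ∘ i.succAbove) (b ∘ i.succAbove), ψ (i.insertNth c y))) := by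
    intro c hc
    have hmem : ∀ y ∈ Icc (a ∘ i.succAbove) (b ∘ i.succAbove), i.insertNth c y ∈ Icc a b :=
      fun y hy => Fin.insertNth_mem_Icc.2 ⟨hc, hy⟩
    obtain ⟨C, hC⟩ := hb
    exact isCompact_Icc.tendsto_setIntegral_of_bounded
      (fun k => ((hφ k).comp (continuous_const.finInsertNth i continuous_id)).continuousOn)
      ⟨C, fun k y hy => hC k _ (hmem y hy)⟩ fun y hy => hlim _ (hmem y hy)
  exact (face _ ⟨hab i, le_rfl⟩).sub (face _ ⟨le_rfl, hab i⟩)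

theorem integral_jacMinor_eq_boxFlux_of_contDiff_two (hab : a ≤ b) {i j : Fin (n + 1)}
    (hij : i ≠ j) {f g : (Fin (n + 1) → ℝ) → ℝ} (hf : ContDiff ℝ 1 f) (hg : ContDiff ℝ 2 g) :
    ∫ x in Icc a b, jacMinor f g (Pi.single i 1) (Pi.single j 1) x =
      boxFlux a b i (fun x => f x * fderiv ℝ g x (Pi.single j 1))
        - boxFlux a b j (fun x => f x * fderiv ℝ g x (Pi.single i 1)) := by
  set F : Fin (n + 1) → (Fin (n + 1) → ℝ) → ℝ := fun k =>
    if k = i then fun x => f x * fderiv ℝ g x (Pi.single j 1)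
    else if k = j then fun x => -(f x * fderiv ℝ g x (Pi.single i 1)) else 0 with hF
  have hFi : F i = fun x => f x * fderiv ℝ g x (Pi.single j 1) := if_pos rfl
  have hFj : F j = fun x => -(f x * fderiv ℝ g x (Pi.single i 1)) := by
    simp [hF, hij.symm]
  have hF0 : ∀ k, k ≠ i ∧ k ≠ j → F k = 0 := fun k hk => by simp [hF, hk.1, hk.2]
  have hFsmooth : ∀ k, ContDiff ℝ 1 (F k) := by
    have hdg : ∀ v, ContDiff ℝ 1 fun x => fderiv ℝ g x v := fun v =>
      (hg.fderiv_right le_rfl).clm_apply contDiff_const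
    intro k
    by_cases hki : k = i
    · subst hki; rw [hFi]; exact hf.mul (hdg _)
    by_cases hkj : k = j
    · subst hkj; rw [hFj]; exact (hf.mul (hdg _)).neg
    rw [hF0 k ⟨hki, hkj⟩]; exact contDiff_const
  have hdiv : ∀ x, ∑ k, fderiv ℝ (F k) x (Pi.single k 1) =
      jacMinor f g (Pi.single i 1) (Pi.single j 1) x := by
    intro x
    rw [Fintype.sum_eq_add i j hij (fun k hk => by simp [hF0 k hk]), hFi, hFj, fderiv_fun_neg,
      jacMinor_eq_fderiv_sub_fderiv (hf.differentiable one_ne_zero x) hg.contDiffAt]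
    simp [sub_eq_add_neg]
  have hflux : ∑ k, boxFlux a b k (F k) =
      boxFlux a b i (fun x => f x * fderiv ℝ g x (Pi.single j 1))
        - boxFlux a b j (fun x => f x * fderiv ℝ g x (Pi.single i 1)) := by
    rw [Fintype.sum_eq_add i j hij (fun k hk => by simp [hF0 k hk, boxFlux]), hFi, hFj]
    simp only [boxFlux, integral_neg]
    ring
  calc ∫ x in Icc a b, jacMinor f g (Pi.single i 1) (Pi.single j 1) x
      = ∫ x in Icc a b, ∑ k, fderiv ℝ (F k) x (Pi.single k 1) :=
        setIntegral_congr_fun measurableSet_Icc fun x _ => (hdiv x).symm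
    _ = ∑ k, boxFlux a b k (F k) :=
        integral_divergence_of_hasFDerivAt_off_countable' a b hab F (fun k x => fderiv ℝ (F k) x)
          ∅ countable_empty (fun k => (hFsmooth k).continuous.continuousOn)
          (fun x _ k => ((hFsmooth k).differentiable one_ne_zero x).hasFDerivAt)
          ((continuous_finsetSum _ fun k _ => ((hFsmooth k).continuous_fderiv one_ne_zero)
            |>.clm_apply continuous_const).continuousOn.integrableOn_compact isCompact_Icc)
    _ = _ := hflux

theorem integral_jacMinor_eq_boxFlux_of_hasCompactSupport (hab : a ≤ b) {i j : Fin (n + 1)}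
    (hij : i ≠ j) {f g : (Fin (n + 1) → ℝ) → ℝ} (hf : ContDiff ℝ 1 f) (hg : ContDiff ℝ 1 g)
    (hcs : HasCompactSupport g) :
    ∫ x in Icc a b, jacMinor f g (Pi.single i 1) (Pi.single j 1) x =
      boxFlux a b i (fun x => f x * fderiv ℝ g x (Pi.single j 1))
        - boxFlux a b j (fun x => f x * fderiv ℝ g x (Pi.single i 1)) := by
  obtain ⟨W, hW, hlim, hbdd⟩ := exists_contDiff_two_tendsto_fderiv hg hcs
  have hDW : ∀ k v, Continuous fun x => fderiv ℝ (W k) x v := fun k v =>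
    ((hW k).continuous_fderiv two_ne_zero).clm_apply continuous_const
  have hDf : ∀ v, Continuous fun x => fderiv ℝ f x v := fun v =>
    (hf.continuous_fderiv one_ne_zero).clm_apply continuous_const
  have bound_mul : ∀ {p : (Fin (n + 1) → ℝ) → ℝ}, Continuous p → ∀ v,
      ∃ C, ∀ k, ∀ x ∈ Icc a b, ‖p x * fderiv ℝ (W k) x v‖ ≤ C := by
    intro p hp v
    obtain ⟨M, hM⟩ := isCompact_Icc.exists_bound_of_continuousOn hp.continuousOn
    obtain ⟨C, hC⟩ := hbdd v
    exact ⟨M * C, fun k x hx => (norm_mul_le _ _).trans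
      (mul_le_mul (hM x hx) (hC k x) (norm_nonneg _) ((norm_nonneg _).trans (hM x hx)))⟩
  have hLHS : Tendsto (fun k => ∫ x in Icc a b, jacMinor f (W k) (Pi.single i 1) (Pi.single j 1) x)
      atTop (𝓝 (∫ x in Icc a b, jacMinor f g (Pi.single i 1) (Pi.single j 1) x)) := by
    obtain ⟨C₁, hC₁⟩ := bound_mul (hDf (Pi.single i 1)) (Pi.single j 1)
    obtain ⟨C₂, hC₂⟩ := bound_mul (hDf (Pi.single j 1)) (Pi.single i 1)
    refine isCompact_Icc.tendsto_setIntegral_of_bounded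
      (fun k => ((hDf _).mul (hDW k _) |>.sub ((hDf _).mul (hDW k _))).continuousOn)
      ⟨C₁ + C₂, fun k x hx => (norm_sub_le _ _).trans (add_le_add (hC₁ k x hx) (hC₂ k x hx))⟩
      fun x _ => ((hlim x _).const_mul _).sub ((hlim x _).const_mul _)
  have hRHS := (tendsto_boxFlux hab i (fun k => hf.continuous.mul (hDW k (Pi.single j 1)))
      (bound_mul hf.continuous _) fun x _ => (hlim x _).const_mul (f x)).sub
    (tendsto_boxFlux hab j (fun k => hf.continuous.mul (hDW k (Pi.single i 1)))
      (bound_mul hf.continuous _) fun x _ => (hlim x _).const_mul (f x))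
  simp only [integral_jacMinor_eq_boxFlux_of_contDiff_two hab hij hf (hW _)] at hLHS
  exact tendsto_nhds_unique hLHS hRHS

theorem integral_jacMinor_eq_boxFlux (hab : a ≤ b) {i j : Fin (n + 1)} (hij : i ≠ j)
    {f g : (Fin (n + 1) → ℝ) → ℝ} (hf : ContDiff ℝ 1 f) (hg : ContDiff ℝ 1 g) :
    ∫ x in Icc a b, jacMinor f g (Pi.single i 1) (Pi.single j 1) x =
      boxFlux a b i (fun x => f x * fderiv ℝ g x (Pi.single j 1))
        - boxFlux a b j (fun x => f x * fderiv ℝ g x (Pi.single i 1)) := by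
  obtain ⟨g', hg', hcs, hg'g⟩ := isCompact_Icc.exists_contDiff_hasCompactSupport_eventuallyEq hg
  have hD : EqOn (fderiv ℝ g') (fderiv ℝ g) (Icc a b) := fun x hx => (hg'g x hx).fderiv_eq
  have hflux : ∀ k v, boxFlux a b k (fun x => f x * fderiv ℝ g' x v) =
      boxFlux a b k (fun x => f x * fderiv ℝ g x v) := fun k v =>
    boxFlux_congr hab k fun x hx => by simp only [hD hx]
  rw [← hflux, ← hflux, ← integral_jacMinor_eq_boxFlux_of_hasCompactSupport hab hij hf hg' hcs]
  exact setIntegral_congr_fun measurableSet_Icc fun x hx => by simp only [jacMinor, hD hx]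

end Box

section UnitCube

theorem isOpen_unitCube : IsOpen unitCube :=
  isOpen_set_pi finite_univ fun _ _ => isOpen_Ioo

theorem unitCube_ae_eq_Icc : unitCube =ᵐ[volume] Icc (0 : Fin 3 → ℝ) 1 :=
  Measure.univ_pi_Ioo_ae_eq_Icc

theorem frontier_unitCube : frontier unitCube = (univ.pi fun _ => Icc (0 : ℝ) 1) \ unitCube := by
  rw [frontier, isOpen_unitCube.interior_eq, unitCube, closure_pi_set]
  simp only [closure_Ioo zero_ne_one]

theorem eventually_insertNth_add_smul_single_mem_frontier_unitCube {i j : Fin 3} (hij : i ≠ j)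
    {c : ℝ} (hc : c = 0 ∨ c = 1) {y : Fin 2 → ℝ} (hy : y ∈ univ.pi fun _ => Ioo (0 : ℝ) 1) :
    ∀ᶠ t : ℝ in 𝓝 0, i.insertNth c y + t • Pi.single j 1 ∈ frontier unitCube := by
  have hi : ∀ t : ℝ, (i.insertNth c y + t • Pi.single j 1 : Fin 3 → ℝ) i = c := fun t => by
    simp [Pi.single_eq_of_ne hij]
  have hcoord : ∀ m, m ≠ i → ∀ᶠ t : ℝ in 𝓝 0,
      (i.insertNth c y + t • Pi.single j 1 : Fin 3 → ℝ) m ∈ Ioo (0 : ℝ) 1 := by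
    intro m hm
    obtain ⟨m, rfl⟩ := Fin.exists_succAbove_eq hm
    have hcont : Continuous fun t : ℝ =>
        (i.insertNth c y + t • Pi.single j 1 : Fin 3 → ℝ) (i.succAbove m) := by fun_prop
    exact hcont.continuousAt.eventually_mem (isOpen_Ioo.mem_nhds (by simpa using hy m trivial))
  filter_upwards [eventually_all.2 fun m => eventually_imp_distrib_left.2 (hcoord m)] with t ht
  rw [frontier_unitCube]
  refine ⟨fun m _ => ?_, fun hmem => ?_⟩
  · by_cases hm : m = i
    · subst hm; rw [hi]; rcases hc with rfl | rfl <;> simp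
    · exact Ioo_subset_Icc_self (ht m hm)
  · have := hmem i trivial
    rw [hi] at this
    rcases hc with rfl | rfl <;> simp at this

variable {A : Mat} {u : (Fin 3 → ℝ) → (Fin 3 → ℝ)}

theorem fderiv_insertNth_single_eq_mulVec (hu : Differentiable ℝ u)
    (hbc : ∀ x ∈ frontier unitCube, u x = A.mulVec x) {i j : Fin 3} (hij : i ≠ j) {c : ℝ}
    (hc : c = 0 ∨ c = 1) {y : Fin 2 → ℝ} (hy : y ∈ univ.pi fun _ => Ioo (0 : ℝ) 1) :
    fderiv ℝ u (i.insertNth c y) (Pi.single j 1) = A.mulVec (Pi.single j 1) :=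
  (hu _).fderiv_apply_eq_of_eventually_eq_clm (Matrix.toLin' A).toContinuousLinearMap <|
    (eventually_insertNth_add_smul_single_mem_frontier_unitCube hij hc hy).mono fun _ ht => hbc _ ht

theorem integral_jacMinor_unitCube (hu : ContDiff ℝ 1 u)
    (hbc : ∀ x ∈ frontier unitCube, u x = A.mulVec x) {i j : Fin 3} (hij : i ≠ j) (k l : Fin 3) :
    ∫ x in unitCube, jacMinor (fun x => u x k) (fun x => u x l) (Pi.single i 1) (Pi.single j 1) x
      = A k i * A l j - A k j * A l i := by
  have hud : Differentiable ℝ u := hu.differentiable one_ne_zero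
  have hcomp : ∀ k, ContDiff ℝ 1 fun x => u x k := fun k => contDiff_apply ℝ ℝ k |>.comp hu
  have hface : ∀ {i j : Fin 3}, i ≠ j → boxFlux 0 1 i
      (fun x => u x k * fderiv ℝ (fun x => u x l) x (Pi.single j 1)) = A k i * A l j := by
    intro i j hij
    refine boxFlux_zero_one_eq i ((hcomp k).continuous.mul
      (((hcomp l).continuous_fderiv one_ne_zero).clm_apply continuous_const)) fun y hy => ?_
    have hval : ∀ c, c = 0 ∨ c = 1 → u (i.insertNth c y) = A.mulVec (i.insertNth c y) :=
      fun c hc => hbc _ (by simpa using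
        (eventually_insertNth_add_smul_single_mem_frontier_unitCube hij hc hy).self_of_nhds)
    have hder : ∀ c, c = 0 ∨ c = 1 →
        fderiv ℝ (fun x => u x l) (i.insertNth c y) (Pi.single j 1) = A l j := fun c hc => by
      rw [fderiv_apply (hud _), ContinuousLinearMap.comp_apply, ContinuousLinearMap.proj_apply,
        fderiv_insertNth_single_eq_mulVec hud hbc hij hc hy]
      simp
    simp only [Pi.mul_apply]
    rw [hval 1 (Or.inr rfl), hval 0 (Or.inl rfl), hder 1 (Or.inr rfl), hder 0 (Or.inl rfl),
      ← sub_mul, ← Pi.sub_apply, ← Matrix.mulVec_sub, Fin.insertNth_sub_same, sub_zero]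
    simp
  rw [setIntegral_congr_set unitCube_ae_eq_Icc, integral_jacMinor_eq_boxFlux zero_le_one hij (hcomp k) (hcomp l),
    hface hij, hface hij.symm]

end UnitCube

/-- translation (polyconvexity) inequality: for u ∈ C¹ with affine boundary
data u = A·x on ∂Ω, ∫_Ω (ε₂₃² − ε₂₂ε₃₃) ≥ A₂₃² − A₂₂A₃₃. -/
theorem translation_lower_bound
    (A : Mat) (hA : A.IsSymm)
    (u : (Fin 3 → ℝ) → (Fin 3 → ℝ)) (hu : ContDiff ℝ 1 u)
    (hbc : ∀ x ∈ frontier unitCube, u x = A.mulVec x) :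
    A 1 2 ^ 2 - A 1 1 * A 2 2
      ≤ ∫ x in unitCube,
          ((symGrad u x 1 2)^2 - (symGrad u x 1 1) * (symGrad u x 2 2)) := by
  let D : (Fin 3 → ℝ) → Fin 3 → Fin 3 → ℝ := fun x k j => fderiv ℝ u x (Pi.single j 1) k
  have hD : ∀ k j, Continuous fun x => D x k j := fun k j =>
    (continuous_apply k).comp ((hu.continuous_fderiv one_ne_zero).clm_apply continuous_const)
  have hJ : ∀ x, jacMinor (fun x => u x 1) (fun x => u x 2) (Pi.single 1 1) (Pi.single 2 1) x =
      D x 1 1 * D x 2 2 - D x 1 2 * D x 2 1 := fun x => by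
    simp [D, jacMinor, fderiv_apply ((hu.differentiable one_ne_zero) x)]
  have hsplit : ∀ x, symGrad u x 1 2 ^ 2 - symGrad u x 1 1 * symGrad u x 2 2 =
      (D x 1 2 - D x 2 1) ^ 2 / 4 -
        jacMinor (fun x => u x 1) (fun x => u x 2) (Pi.single 1 1) (Pi.single 2 1) x := fun x => by
    rw [hJ]; simp only [symGrad, D]; ring
  have hint : ∀ {F : (Fin 3 → ℝ) → ℝ}, Continuous F → IntegrableOn F unitCube := fun hF =>
    (hF.continuousOn.integrableOn_compact isCompact_Icc).congr_set_ae unitCube_ae_eq_Icc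
  have hrot : 0 ≤ ∫ x in unitCube, (D x 1 2 - D x 2 1) ^ 2 / 4 :=
    setIntegral_nonneg isOpen_unitCube.measurableSet fun x _ => by positivity
  rw [integral_congr_ae (ae_of_all _ hsplit), integral_sub
      (hint (F := fun x => (D x 1 2 - D x 2 1) ^ 2 / 4)
        ((((hD 1 2).sub (hD 2 1)).pow 2).div_const 4))
      (hint ((continuous_congr hJ).2 (((hD 1 1).mul (hD 2 2)).sub ((hD 1 2).mul (hD 2 1))))),
    integral_jacMinor_unitCube hu hbc (by decide) 1 2, hA.apply 1 2]
  linarith [sq (A 1 2)]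
end
end

section
/- Let λ, μ ∈ ℝ with μ > 0 and λ + 2μ > 0, let t₁, t₂, t₃ ∈ ℝ, and set t′ᵢ = (λ + tᵢ)/(λ + 2μ). Let C be the isotropic elasticity tensor with Lamé parameters λ, μ and let T be the translator operator on Sym₃ associated with t = diag(t₁,t₂,t₃), i.e. T:ε = (tr ε)·t + (t:ε)·E + (tr t)·(ε − (tr ε)E) − (ε·t + t·ε). Then the quadratic form ε ↦ ε:((C − T):ε) is nonnegative on Sym₃ if and only if |t′ᵢ| ≤ 1 for i = 1, 2, 3 and 2t′₁t′₂t′₃ − (t′₁² + t′₂² + t′₃²) + 1 ≥ 0. -/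
open Matrix

noncomputable section

/-- The translator operator T(t):ε = (tr ε)t + (t:ε)E + (tr t)(ε − (tr ε)E) − (ε·t + t·ε). -/
def translOp (t e : Mat) : Mat :=
  e.trace • t + (inn t e) • (1:Mat) + t.trace • (e - e.trace • (1:Mat)) - (e * t + t * e)

/-!
On Sym₃ the form splits into a quadratic form in the diagonal entries, with matrix
(λ + 2μ)·[[1, t′₃, t′₂], [t′₃, 1, t′₁], [t′₂, t′₁, 1]], plus the shear terms 2(2μ − tᵢ)ε²ⱼₖ.
Completing the square in ε₁₁ reduces nonnegativity of the diagonal part to that of a binary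
form, whose discriminant condition is the determinant condition. Finally |t′ᵢ| ≤ 1 already
gives 2μ − tᵢ ≥ 0, so the shear terms impose nothing further.
-/

theorem forall_binary_form_nonneg_iff (p q r : ℝ) :
    (∀ y z : ℝ, 0 ≤ p * y ^ 2 + 2 * q * y * z + r * z ^ 2) ↔
      0 ≤ p ∧ 0 ≤ r ∧ q ^ 2 ≤ p * r := by
  constructor
  · intro H
    have hdisc : discrim p (2 * q) r ≤ 0 :=
      discrim_le_zero fun y => by simpa [sq, mul_assoc] using H y 1
    refine ⟨by simpa using H 1 0, by simpa using H 0 1, ?_⟩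
    rw [discrim] at hdisc
    linarith
  · rintro ⟨hp, hr, hq⟩ y z
    rcases hp.eq_or_lt with rfl | hp
    · obtain rfl : q = 0 := pow_eq_zero_iff two_ne_zero |>.1 (by nlinarith [sq_nonneg q])
      simpa using mul_nonneg hr (sq_nonneg z)
    · refine (mul_nonneg_iff_of_pos_left hp).1 ?_
      nlinarith [sq_nonneg (p * y + q * z), mul_nonneg (sub_nonneg.2 hq) (sq_nonneg z)]

theorem forall_sq_add_nonneg_iff (f g : ℝ → ℝ → ℝ) :
    (∀ x y z : ℝ, 0 ≤ (x + g y z) ^ 2 + f y z) ↔ ∀ y z : ℝ, 0 ≤ f y z := by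
  refine ⟨fun H y z => ?_, fun H x y z => add_nonneg (sq_nonneg _) (H y z)⟩
  simpa using H (-g y z) y z

theorem unit_diag_form_eq_sq_add (a b c x y z : ℝ) :
    x ^ 2 + y ^ 2 + z ^ 2 + 2 * c * x * y + 2 * b * x * z + 2 * a * y * z =
      (x + (c * y + b * z)) ^ 2
        + ((1 - c ^ 2) * y ^ 2 + 2 * (a - b * c) * y * z + (1 - b ^ 2) * z ^ 2) := by
  ring

theorem forall_unit_diag_form_nonneg_iff (a b c : ℝ) :
    (∀ x y z : ℝ, 0 ≤ x ^ 2 + y ^ 2 + z ^ 2 + 2 * c * x * y + 2 * b * x * z + 2 * a * y * z) ↔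
      |a| ≤ 1 ∧ |b| ≤ 1 ∧ |c| ≤ 1 ∧ 0 ≤ 2 * a * b * c - (a ^ 2 + b ^ 2 + c ^ 2) + 1 := by
  simp only [unit_diag_form_eq_sq_add]
  refine (forall_sq_add_nonneg_iff _ _).trans ?_
  rw [forall_binary_form_nonneg_iff, sub_nonneg, sub_nonneg, sq_le_one_iff_abs_le_one,
    sq_le_one_iff_abs_le_one,
    show 2 * a * b * c - (a ^ 2 + b ^ 2 + c ^ 2) + 1
      = (1 - c ^ 2) * (1 - b ^ 2) - (a - b * c) ^ 2 by ring, sub_nonneg]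
  refine ⟨fun ⟨hc, hb, hschur⟩ => ⟨?_, hb, hc, hschur⟩, fun ⟨_, hb, hc, hschur⟩ => ⟨hc, hb, hschur⟩⟩
  obtain ⟨hbc₁, hbc₂⟩ := abs_le.1 (abs_mul b c ▸ mul_le_one₀ hb (abs_nonneg c) hc)
  -- (1 ∓ bc)² exceeds the Schur bound (1 - b²)(1 - c²) by (b ∓ c)²
  have hup := abs_le_of_sq_le_sq'
    (by nlinarith [sq_nonneg (b - c)] : (a - b * c) ^ 2 ≤ (1 - b * c) ^ 2) (by linarith)
  have hlow := abs_le_of_sq_le_sq'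
    (by nlinarith [sq_nonneg (b + c)] : (a - b * c) ^ 2 ≤ (1 + b * c) ^ 2) (by linarith)
  exact abs_le.2 ⟨by linarith, by linarith⟩

theorem inn_isoC_sub_translOp_diagonal (lam μ t₁ t₂ t₃ : ℝ) {e : Mat} (he : e.IsSymm) :
    inn e (isoC lam μ e - translOp (diagonal ![t₁, t₂, t₃]) e) =
      (lam + 2 * μ) * (e 0 0 ^ 2 + e 1 1 ^ 2 + e 2 2 ^ 2) + 2 * (lam + t₃) * e 0 0 * e 1 1
        + 2 * (lam + t₂) * e 0 0 * e 2 2 + 2 * (lam + t₁) * e 1 1 * e 2 2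
        + 2 * (2 * μ - t₃) * e 0 1 ^ 2 + 2 * (2 * μ - t₂) * e 0 2 ^ 2
        + 2 * (2 * μ - t₁) * e 1 2 ^ 2 := by
  simp [inn, isoC, translOp, trace, Fin.sum_univ_three, mul_apply, he.apply 0 1, he.apply 0 2,
    he.apply 1 2]
  ring

theorem translator_convexity_general (lam μ : ℝ) (hlμ : 0 < lam + 2*μ)
    (t₁ t₂ t₃ : ℝ) :
    (∀ e : Mat, e.IsSymm →
        0 ≤ inn e (isoC lam μ e - translOp (Matrix.diagonal ![t₁, t₂, t₃]) e))
    ↔ ((|(lam + t₁)/(lam + 2*μ)| ≤ 1 ∧ |(lam + t₂)/(lam + 2*μ)| ≤ 1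
          ∧ |(lam + t₃)/(lam + 2*μ)| ≤ 1)
        ∧ 0 ≤ 2*((lam + t₁)/(lam + 2*μ))*((lam + t₂)/(lam + 2*μ))*((lam + t₃)/(lam + 2*μ))
              - (((lam + t₁)/(lam + 2*μ))^2 + ((lam + t₂)/(lam + 2*μ))^2
                  + ((lam + t₃)/(lam + 2*μ))^2) + 1) := by
  have hscale : ∀ x y z : ℝ, (lam + 2 * μ) * (x ^ 2 + y ^ 2 + z ^ 2
      + 2 * ((lam + t₃) / (lam + 2 * μ)) * x * y + 2 * ((lam + t₂) / (lam + 2 * μ)) * x * z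
      + 2 * ((lam + t₁) / (lam + 2 * μ)) * y * z) = (lam + 2 * μ) * (x ^ 2 + y ^ 2 + z ^ 2)
      + 2 * (lam + t₃) * x * y + 2 * (lam + t₂) * x * z + 2 * (lam + t₁) * y * z := by
    intro x y z
    field_simp
  have hshear : ∀ t, |(lam + t) / (lam + 2 * μ)| ≤ 1 → 0 ≤ 2 * μ - t := fun t ht => by
    have := (div_le_one hlμ).1 (le_abs_self _ |>.trans ht)
    linarith
  rw [and_assoc, and_assoc, ← forall_unit_diag_form_nonneg_iff]
  constructor
  · intro H x y z
    refine (mul_nonneg_iff_of_pos_left hlμ).1 ?_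
    rw [hscale]
    simpa [inn_isoC_sub_translOp_diagonal _ _ _ _ _ (isSymm_diagonal _)] using
      H (diagonal ![x, y, z]) (isSymm_diagonal _)
  · intro H e he
    obtain ⟨h₁, h₂, h₃, -⟩ := (forall_unit_diag_form_nonneg_iff _ _ _).1 H
    have hdiag := hscale (e 0 0) (e 1 1) (e 2 2) ▸ mul_nonneg hlμ.le (H (e 0 0) (e 1 1) (e 2 2))
    rw [inn_isoC_sub_translOp_diagonal _ _ _ _ _ he]
    have hs₁ := mul_nonneg (hshear _ h₁) (sq_nonneg (e 1 2))
    have hs₂ := mul_nonneg (hshear _ h₂) (sq_nonneg (e 0 2))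
    have hs₃ := mul_nonneg (hshear _ h₃) (sq_nonneg (e 0 1))
    linarith

/-- the translated quadratic form ε ↦ ε:((C − T):ε) is nonnegative on Sym₃
iff |t′ᵢ| ≤ 1 for i = 1,2,3 and 2t′₁t′₂t′₃ − (t′₁² + t′₂² + t′₃²) + 1 ≥ 0, where
t′ᵢ = (λ + tᵢ)/(λ + 2μ). -/
theorem translator_convexity (lam μ : ℝ) (hμ : 0 < μ) (hlμ : 0 < lam + 2*μ)
    (t₁ t₂ t₃ : ℝ) :
    (∀ e : Mat, e.IsSymm →
        0 ≤ inn e (isoC lam μ e - translOp (Matrix.diagonal ![t₁, t₂, t₃]) e))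
    ↔ ((|(lam + t₁)/(lam + 2*μ)| ≤ 1 ∧ |(lam + t₂)/(lam + 2*μ)| ≤ 1
          ∧ |(lam + t₃)/(lam + 2*μ)| ≤ 1)
        ∧ 0 ≤ 2*((lam + t₁)/(lam + 2*μ))*((lam + t₂)/(lam + 2*μ))*((lam + t₃)/(lam + 2*μ))
              - (((lam + t₁)/(lam + 2*μ))^2 + ((lam + t₂)/(lam + 2*μ))^2
                  + ((lam + t₃)/(lam + 2*μ))^2) + 1) :=
  translator_convexity_general lam μ hlμ t₁ t₂ t₃
end
end

section
/- Let C₋, C₊ be isotropic elasticity tensors on Sym₃ with Lamé parameters (λ₋, μ₋), (λ₊, μ₊), μ₋ > 0, ν₋ = λ₋/(2(λ₋+μ₋)) < 1, and let ⟦C⟧ = C₊ − C₋ be invertible. Let c = (1−2ν₋)/(2μ₋(1−ν₋)). Then: (i) for every unit vector n and q ∈ ℝ, K₋(n):(qE) = c·q·n⊗n, and the quadratic form (qE):(K₋(n):(qE)) = c·q², independent of n; (ii) consequently, for any m₋ ∈ [0,1], any unit vectors n⁽¹⁾,…,n⁽ᵐ⁾ and any weights β⁽ⁱ⁾ ≥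 0 with Σβ⁽ⁱ⁾ = 1, if q ∈ ℝ and e₀ ∈ Sym₃ satisfy (⟦C⟧⁻¹ + m₋ Σᵢ β⁽ⁱ⁾K₋(n⁽ⁱ⁾)):(qE) = e₀, then q·(E:(⟦C⟧⁻¹:E) + m₋·c) = tr(e₀), so q — and hence the interaction energy (1/2)(1−m₋)·q·tr(e₀) — is determined by tr(e₀) alone and does not depend on the normals, the weights, or the rank of the laminate. -/
open Matrix

noncomputable section

lemma trace_vecMulVec' (n m : Fin 3 → ℝ) : (vecMulVec n m).trace = n ⬝ᵥ m := by
  simp [Matrix.trace, vecMulVec, dotProduct, Matrix.diag]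

/-- for a spherical field q₊ = qE one has K₋(n):(qE) = c·q·n⊗n with quadratic
form c·q², independent of n; hence in any optimal laminate the transmitting equation gives
q·(E:(⟦C⟧⁻¹:E) + m₋c) = tr e₀, so q (and the interaction energy) is determined by tr e₀
alone, independently of normals, weights and rank. -/
theorem spherical_field_rank_independence
    (lm μm lp μp : ℝ) (hμm : 0 < μm)
    (νm : ℝ) (hνm : νm = lm/(2*(lm + μm))) (hν1 : νm < 1)
    (c : ℝ) (hc : c = (1 - 2*νm)/(2*μm*(1 - νm)))
    (D : Mat →ₗ[ℝ] Mat)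
    (hD₁ : ∀ w : Mat, w.IsSymm → D (isoC lp μp w - isoC lm μm w) = w)
    (hD₂ : ∀ w : Mat, w.IsSymm → isoC lp μp (D w) - isoC lm μm (D w) = w) :
    (∀ (nv : Fin 3 → ℝ), nv ⬝ᵥ nv = 1 → ∀ q : ℝ,
        Kop μm νm nv (q • (1:Mat)) = (c*q) • vecMulVec nv nv
        ∧ inn (q • (1:Mat)) (Kop μm νm nv (q • (1:Mat))) = c * q^2)
    ∧ ∀ (m : ℕ) (nv : Fin m → Fin 3 → ℝ), (∀ i, nv i ⬝ᵥ nv i = 1) →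
        ∀ (β : Fin m → ℝ), (∀ i, 0 ≤ β i) → (∑ i, β i = 1) →
        ∀ mminus : ℝ, mminus ∈ Set.Icc (0:ℝ) 1 →
        ∀ (q : ℝ) (e₀ : Mat),
          D (q • (1:Mat)) + mminus • ∑ i, β i • Kop μm νm (nv i) (q • (1:Mat)) = e₀ →
          q * (inn (1:Mat) (D (1:Mat)) + mminus * c) = e₀.trace := by
  have hμ0 : μm ≠ 0 := ne_of_gt hμm
  have hν0 : (1 - νm) ≠ 0 := by linarith
  have key : ∀ (nv : Fin 3 → ℝ), nv ⬝ᵥ nv = 1 → ∀ q : ℝ,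
      Kop μm νm nv (q • (1:Mat)) = (c*q) • vecMulVec nv nv := by
    intro nv hnv q
    have h1 : (q • (1:Mat)).mulVec nv = q • nv := by
      rw [smul_mulVec, one_mulVec]
    have h2 : nv ⬝ᵥ (q • nv) = q := by
      rw [dotProduct_smul, hnv, smul_eq_mul, mul_one]
    rw [Kop, h1, h2]
    ext i j
    simp only [Matrix.smul_apply, Matrix.sub_apply, Matrix.add_apply, vecMulVec_apply,
      Pi.smul_apply, smul_eq_mul]
    rw [hc]
    field_simp
    ring
  have htr : ∀ (nv : Fin 3 → ℝ), nv ⬝ᵥ nv = 1 → ∀ q : ℝ,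
      (Kop μm νm nv (q • (1:Mat))).trace = c * q := by
    intro nv hnv q
    rw [key nv hnv q, trace_smul, trace_vecMulVec', hnv, smul_eq_mul, mul_one]
  constructor
  · intro nv hnv q
    refine ⟨key nv hnv q, ?_⟩
    rw [inn, smul_mul_assoc, one_mul, trace_smul, smul_eq_mul, htr nv hnv q]
    ring
  · intro m nv hnv β hβ hβ1 mminus hm q e₀ he
    have hD1 : inn (1:Mat) (D (1:Mat)) = (D (1:Mat)).trace := by
      rw [inn, one_mul]
    rw [← he]
    rw [trace_add, trace_smul, Matrix.trace_sum]
    have : ∀ i, (β i • Kop μm νm (nv i) (q • (1:Mat))).trace = β i * (c * q) := by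
      intro i
      rw [trace_smul, htr (nv i) (hnv i) q, smul_eq_mul]
    simp only [this]
    rw [← Finset.sum_mul, hβ1, one_mul]
    have hDq : D (q • (1:Mat)) = q • D (1:Mat) := D.map_smul q (1:Mat)
    rw [hDq, trace_smul, smul_eq_mul, hD1]
    simp [smul_eq_mul]; ring
end
end

section
/- Let A and K₁, …, Kₙ be self-adjoint linear operators on Sym₃, let β₁, …, βₙ ≥ 0 with Σᵢβᵢ = 1, set B = Σᵢ βᵢKᵢ, let e₀ ∈ Sym₃, and let γ* ∈ ℝ. Suppose m₀ ∈ (0,1) is such that A + (1−m)B is invertible for all m in a neighborhood of m₀, and define M(m) = (A + (1−m)B)⁻¹, q(m) = M(m):e₀, and E(m) = m·(γ* + (1/2)·e₀:q(m)). Then E is differentiable at m₀ and E′(m₀) = γ* + (1/2)·q(m₀):((A + B):q(m₀)). In particular, if additionally q(m₀):(Kᵢ:q(m₀)) takes the same value 𝒦 for every i, then E′(m₀) = γ* + (1/2)·(q(m₀):(A:q(m₀)) + 𝒦). -/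
/-!
With `L m = A + (1 - m) • B` we have `M = L⁻¹` and `L' = -B`, so `q' = M B q` and the product rule
gives `E' = γ* + ½ e₀:q + ½ m e₀:(M B q)`. Since `L`, hence `M`, is self-adjoint for `a:b = tr(ab)`,
`e₀:(M B q) = q:(B q)` and `e₀:q = (L q):q = q:(A q) + (1 - m) q:(B q)`; the terms in `m` cancel.
-/

open Matrix

noncomputable section

open Filter Topology LinearMap

theorem HasDerivAt.ringInverse {𝕜 R : Type*} [NontriviallyNormedField 𝕜] [NormedRing R]
    [HasSummableGeomSeries R] [NormedAlgebra 𝕜 R] {L : 𝕜 → R} {L' : R} {t : 𝕜}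
    (hL : HasDerivAt L L' t) (ht : IsUnit (L t)) :
    HasDerivAt (fun s => Ring.inverse (L s))
      (-(Ring.inverse (L t) * L' * Ring.inverse (L t))) t := by
  obtain ⟨u, hu⟩ := ht
  have hinv := hasFDerivAt_ringInverse (𝕜 := 𝕜) u
  rw [hu] at hinv
  simpa [Function.comp_def, ← hu] using hinv.comp_hasDerivAt t hL

def interactionEnergy {E : Type*} [AddCommGroup E] [Module ℝ E] (φ : LinearMap.BilinForm ℝ E)
    (M : ℝ → Module.End ℝ E) (e : E) (γ m : ℝ) : ℝ :=
  m * (γ + 1 / 2 * φ e (M m e))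

section BilinForm

variable {R E : Type*} [CommRing R] [AddCommGroup E] [Module R E] {φ : LinearMap.BilinForm R E}

theorem LinearMap.IsSelfAdjoint.of_mul_eq_one {L M : Module.End R E} (hL : φ.IsSelfAdjoint L)
    (hLM : L * M = 1) : φ.IsSelfAdjoint M := fun x y => by
  have hLM' : ∀ z, L (M z) = z := fun z => congr($hLM z)
  calc φ (M x) y = φ (M x) (L (M y)) := by rw [hLM']
    _ = φ (L (M x)) (M y) := (hL _ _).symm
    _ = φ x (M y) := by rw [hLM']

theorem LinearMap.IsSelfAdjoint.sum_smul {ι : Type*} (s : Finset ι) (c : ι → R)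
    {K : ι → Module.End R E} (hK : ∀ i ∈ s, φ.IsSelfAdjoint (K i)) :
    φ.IsSelfAdjoint ⇑(∑ i ∈ s, c i • K i) :=
  (mem_selfAdjointSubmodule _).1 <|
    Submodule.sum_mem _ fun i hi => Submodule.smul_mem _ _ (hK i hi)

theorem interactionEnergy_deriv_identity {A B M : Module.End R E} {m : R}
    (hA : φ.IsSelfAdjoint A) (hB : φ.IsSelfAdjoint B) (hLM : (A + (1 - m) • B) * M = 1)
    (e : E) :
    φ e (M e) + m * φ e (M (B (M e))) = φ (M e) (A (M e) + B (M e)) := by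
  set q := M e
  have hL : φ.IsSelfAdjoint ⇑(A + (1 - m) • B) := hA.add (hB.smul _)
  have hLq : (A + (1 - m) • B) q = e := congr($hLM e)
  have h₁ : φ e q = φ q e := by simpa only [hLq] using hL q q
  have h₂ : φ e (M (B q)) = φ q (B q) := (hL.of_mul_eq_one hLM e (B q)).symm
  rw [h₁, h₂, ← hLq]
  simp only [LinearMap.add_apply, LinearMap.smul_apply, map_add, map_smul, smul_eq_mul]
  ring

end BilinForm

section Derivative

variable {E : Type*} [NormedAddCommGroup E] [NormedSpace ℝ E] [FiniteDimensional ℝ E]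

theorem hasDerivAt_inverse_affine_apply {A B : Module.End ℝ E} {M : ℝ → Module.End ℝ E} {m₀ : ℝ}
    (hM : ∀ᶠ m in 𝓝 m₀, M m * (A + (1 - m) • B) = 1 ∧ (A + (1 - m) • B) * M m = 1) (x : E) :
    HasDerivAt (fun m => M m x) (M m₀ (B (M m₀ x))) m₀ := by
  let L : ℝ → E →L[ℝ] E := fun m => toContinuousLinearMap A + (1 - m) • toContinuousLinearMap B
  have hL : HasDerivAt L (-toContinuousLinearMap B) m₀ :=
    ((hasDerivAt_const m₀ _).add (((hasDerivAt_id m₀).const_sub 1).smul_const _)).congr_deriv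
      (by simp)
  have hLM : ∀ᶠ m in 𝓝 m₀,
      L m * toContinuousLinearMap (M m) = 1 ∧ toContinuousLinearMap (M m) * L m = 1 := by
    filter_upwards [hM] with m hm
    exact ⟨ContinuousLinearMap.ext fun y => congr($(hm.2) y),
      ContinuousLinearMap.ext fun y => congr($(hm.1) y)⟩
  have hinv : ∀ᶠ m in 𝓝 m₀, Ring.inverse (L m) = toContinuousLinearMap (M m) :=
    hLM.mono fun m hm => Ring.inverse_unit ⟨_, _, hm.1, hm.2⟩
  have h := ((hL.ringInverse (isUnit_iff_exists.2 ⟨_, hLM.self_of_nhds⟩)).clm_apply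
    (hasDerivAt_const m₀ x)).congr_of_eventuallyEq (hinv.mono fun m hm => congr($hm x).symm)
  rw [hinv.self_of_nhds] at h
  simpa using h

theorem hasDerivAt_interactionEnergy {φ : LinearMap.BilinForm ℝ E} {A B : Module.End ℝ E}
    {M : ℝ → Module.End ℝ E} {m₀ : ℝ} (hA : φ.IsSelfAdjoint A) (hB : φ.IsSelfAdjoint B)
    (hM : ∀ᶠ m in 𝓝 m₀, M m * (A + (1 - m) • B) = 1 ∧ (A + (1 - m) • B) * M m = 1)
    (e : E) (γ : ℝ) :
    HasDerivAt (interactionEnergy φ M e γ)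
      (γ + 1 / 2 * φ (M m₀ e) (A (M m₀ e) + B (M m₀ e))) m₀ := by
  have hq := hasDerivAt_inverse_affine_apply hM e
  have hφq : HasDerivAt (fun m => φ e (M m e)) (φ e (M m₀ (B (M m₀ e)))) m₀ :=
    (toContinuousLinearMap (φ e)).hasFDerivAt.comp_hasDerivAt m₀ hq
  have hid := interactionEnergy_deriv_identity hA hB hM.self_of_nhds.2 e
  refine ((hasDerivAt_id' m₀).mul ((hφq.const_mul (1 / 2)).const_add γ)).congr_deriv ?_
  linear_combination (1 / 2 : ℝ) * hid

end Derivative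

def innForm : LinearMap.BilinForm ℝ Mat :=
  (LinearMap.mul ℝ Mat).compr₂ (Matrix.traceLinearMap (Fin 3) ℝ ℝ)

theorem innForm_apply (a b : Mat) : innForm a b = inn a b := rfl

theorem maxwell_relation_derivative_general
    (nK : ℕ)
    (A : Mat →ₗ[ℝ] Mat) (hAsa : ∀ a b : Mat, inn (A a) b = inn a (A b))
    (K : Fin nK → (Mat →ₗ[ℝ] Mat))
    (hKsa : ∀ i, ∀ a b : Mat, inn ((K i) a) b = inn a ((K i) b))
    (β : Fin nK → ℝ) (hβsum : ∑ i, β i = 1)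
    (B : Mat →ₗ[ℝ] Mat) (hB : ∀ a : Mat, B a = ∑ i, β i • (K i) a)
    (e₀ : Mat) (γs : ℝ)
    (m₀ : ℝ)
    (U : Set ℝ) (hU : U ∈ nhds m₀)
    (M : ℝ → (Mat →ₗ[ℝ] Mat))
    (hM : ∀ m ∈ U, (∀ a : Mat, M m (A a + (1-m) • B a) = a)
                 ∧ (∀ a : Mat, A (M m a) + (1-m) • B (M m a) = a))
    (Efun : ℝ → ℝ)
    (hEfun : ∀ m : ℝ, Efun m = m * (γs + (1/2) * inn e₀ (M m e₀))) :
    HasDerivAt Efun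
      (γs + (1/2) * inn (M m₀ e₀) (A (M m₀ e₀) + B (M m₀ e₀))) m₀
    ∧ ∀ 𝒦 : ℝ, (∀ i, inn (M m₀ e₀) ((K i) (M m₀ e₀)) = 𝒦) →
        HasDerivAt Efun
          (γs + (1/2) * (inn (M m₀ e₀) (A (M m₀ e₀)) + 𝒦)) m₀ := by
  -- Any norm on `Mat` will do: only derivatives of real functions leave the proof.
  let _ : NormedAddCommGroup Mat := Matrix.normedAddCommGroup
  let _ : NormedSpace ℝ Mat := Matrix.normedSpace
  have hBsum : B = ∑ i, β i • K i := LinearMap.ext fun a => by simp [hB]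
  have hBsa : innForm.IsSelfAdjoint B := hBsum ▸ .sum_smul _ _ fun i _ => hKsa i
  have hMinv : ∀ᶠ m in 𝓝 m₀, M m * (A + (1 - m) • B) = 1 ∧ (A + (1 - m) • B) * M m = 1 :=
    Filter.mem_of_superset hU fun m hm => ⟨LinearMap.ext (hM m hm).1, LinearMap.ext (hM m hm).2⟩
  obtain rfl : Efun = interactionEnergy innForm M e₀ γs := funext hEfun
  have hE := hasDerivAt_interactionEnergy (φ := innForm) hAsa hBsa hMinv e₀ γs
  refine ⟨hE, fun 𝒦 h𝒦 => hE.congr_deriv ?_⟩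
  set q := M m₀ e₀
  have hBq : inn q (B q) = 𝒦 := by
    rw [hB, ← innForm_apply, map_sum]
    simp only [map_smul, innForm_apply, h𝒦, smul_eq_mul, ← Finset.sum_mul, hβsum, one_mul]
  rw [map_add, innForm_apply, innForm_apply, hBq]

/-- derivative of the interaction energy E(m) = m(γ* + (1/2)e₀:q(m)) with
q(m) = (A + (1−m)B)⁻¹:e₀, B = Σᵢ βᵢKᵢ: E′(m₀) = γ* + (1/2)q:( (A + B):q ); if moreover
q:(Kᵢ:q) = 𝒦 for all i, then E′(m₀) = γ* + (1/2)(q:(A:q) + 𝒦). -/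
theorem maxwell_relation_derivative
    (nK : ℕ)
    (A : Mat →ₗ[ℝ] Mat) (hAsa : ∀ a b : Mat, inn (A a) b = inn a (A b))
    (K : Fin nK → (Mat →ₗ[ℝ] Mat))
    (hKsa : ∀ i, ∀ a b : Mat, inn ((K i) a) b = inn a ((K i) b))
    (β : Fin nK → ℝ) (hβ : ∀ i, 0 ≤ β i) (hβsum : ∑ i, β i = 1)
    (B : Mat →ₗ[ℝ] Mat) (hB : ∀ a : Mat, B a = ∑ i, β i • (K i) a)
    (e₀ : Mat) (he₀ : e₀.IsSymm) (γs : ℝ)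
    (m₀ : ℝ) (hm₀ : m₀ ∈ Set.Ioo (0:ℝ) 1)
    (U : Set ℝ) (hU : U ∈ nhds m₀)
    (M : ℝ → (Mat →ₗ[ℝ] Mat))
    (hM : ∀ m ∈ U, (∀ a : Mat, M m (A a + (1-m) • B a) = a)
                 ∧ (∀ a : Mat, A (M m a) + (1-m) • B (M m a) = a))
    (Efun : ℝ → ℝ)
    (hEfun : ∀ m : ℝ, Efun m = m * (γs + (1/2) * inn e₀ (M m e₀))) :
    HasDerivAt Efun
      (γs + (1/2) * inn (M m₀ e₀) (A (M m₀ e₀) + B (M m₀ e₀))) m₀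
    ∧ ∀ 𝒦 : ℝ, (∀ i, inn (M m₀ e₀) ((K i) (M m₀ e₀)) = 𝒦) →
        HasDerivAt Efun
          (γs + (1/2) * (inn (M m₀ e₀) (A (M m₀ e₀)) + 𝒦)) m₀ :=
  maxwell_relation_derivative_general nK A hAsa K hKsa β hβsum B hB e₀ γs m₀ U hU M hM Efun hEfun
end
end
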